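/- arXiv:1507.01899 — 4 statements merged into one kernel-verified Lean document; each statement's English description precedes it below -/
import Mathlib

section
/- A zigzag persistence module V is indecomposable if and only if V is [-k,k]-indecomposable for every non-negative integer k. -/
open scoped DirectSum

/-- A zigzag persistence module over `F`: vector spaces `V i` for `i : ℤ`, with
structure maps `f i : V i → V (i+1)` and `g i : V i → V (i-1)` at each even index `i`
(so sinks are at odd indices and sources at even indices). -/
structure Zigzag (F : Type) [Field F] : Type 1 where
  V : ℤ → Type
  acg : ∀ i, AddCommGroup (V i)
  mod : ∀ i, Module F (V i)
  f : ∀ i : ℤ, Even i → (V i →ₗ[F] V (i + 1))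
  g : ∀ i : ℤ, Even i → (V i →ₗ[F] V (i - 1))

attribute [instance] Zigzag.acg Zigzag.mod

namespace Zigzag

variable {F : Type} [Field F]

/-- The zero persistence module predicate. -/
def IsZero (M : Zigzag F) : Prop := ∀ i, ∀ x : M.V i, x = 0

/-- `M` vanishes on the index interval `[s,t]`. -/
def VanishesOn (M : Zigzag F) (s t : ℤ) : Prop :=
  ∀ i, s ≤ i → i ≤ t → ∀ x : M.V i, x = 0

/-- An isomorphism of zigzag persistence modules: a family of linear equivalences
commuting with the structure maps. -/
structure Iso (M N : Zigzag F) where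
  e : ∀ i, M.V i ≃ₗ[F] N.V i
  comm_f : ∀ (i : ℤ) (h : Even i) (x : M.V i), e (i + 1) (M.f i h x) = N.f i h (e i x)
  comm_g : ∀ (i : ℤ) (h : Even i) (x : M.V i), e (i - 1) (M.g i h x) = N.g i h (e i x)

/-- A morphism of zigzag persistence modules. -/
structure Hom (M N : Zigzag F) where
  h : ∀ i, M.V i →ₗ[F] N.V i
  comm_f : ∀ (i : ℤ) (hi : Even i) (x : M.V i), h (i + 1) (M.f i hi x) = N.f i hi (h i x)
  comm_g : ∀ (i : ℤ) (hi : Even i) (x : M.V i), h (i - 1) (M.g i hi x) = N.g i hi (h i x)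

/-- Binary (pointwise) direct sum of zigzag persistence modules. -/
def dsum (M N : Zigzag F) : Zigzag F where
  V i := M.V i × N.V i
  acg i := inferInstance
  mod i := inferInstance
  f i h := (M.f i h).prodMap (N.f i h)
  g i h := (M.g i h).prodMap (N.g i h)

/-- `M` is decomposable if it is isomorphic to a direct sum of two non-zero modules. -/
def Decomposable (M : Zigzag F) : Prop :=
  ∃ U W : Zigzag F, Nonempty (Iso M (U.dsum W)) ∧ ¬ U.IsZero ∧ ¬ W.IsZero

/-- `M` is indecomposable: non-zero, and in any decomposition one summand is zero. -/
def Indecomposable (M : Zigzag F) : Prop :=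
  ¬ M.IsZero ∧ ∀ U W : Zigzag F, Iso M (U.dsum W) → U.IsZero ∨ W.IsZero

/-- `M` is `[s,t]`-indecomposable: non-zero, and in any decomposition one summand
vanishes on all indices in `[s,t]`. -/
def IndecOn (M : Zigzag F) (s t : ℤ) : Prop :=
  ¬ M.IsZero ∧ ∀ U W : Zigzag F, Iso M (U.dsum W) → U.VanishesOn s t ∨ W.VanishesOn s t

/-- Direct sum of an arbitrary family of zigzag persistence modules (pointwise). -/
noncomputable def dSum {J : Type} (W : J → Zigzag F) : Zigzag F where
  V i := ⨁ j, (W j).V i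
  acg i := inferInstance
  mod i := inferInstance
  f i h :=
    letI := Classical.decEq J
    DirectSum.toModule F J _ fun j => (DirectSum.lof F J (fun j => (W j).V (i + 1)) j).comp ((W j).f i h)
  g i h :=
    letI := Classical.decEq J
    DirectSum.toModule F J _ fun j => (DirectSum.lof F J (fun j => (W j).V (i - 1)) j).comp ((W j).g i h)

/-- An auxiliary linear map `(PLift P → A) → (PLift Q → B)` induced by `φ : A →ₗ B`:
it is `φ` (under the canonical identifications) when `P` holds, and `0` otherwise. -/
noncomputable def transferMap (F : Type) [Field F] {P Q : Prop} {A B : Type} [AddCommGroup A]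
    [Module F A] [AddCommGroup B] [Module F B] (φ : A →ₗ[F] B) :
    (PLift P → A) →ₗ[F] (PLift Q → B) where
  toFun x := fun _ => letI := Classical.dec P; if hp : P then φ (x ⟨hp⟩) else 0
  map_add' x y := by funext hq; by_cases hp : P <;> simp [hp]
  map_smul' c x := by funext hq; by_cases hp : P <;> simp [hp]

/-- The extended integers `ℤ ∪ {±∞}`. -/
abbrev EInt : Type := WithBot (WithTop ℤ)

/-- Canonical inclusion of `ℤ` into `ℤ ∪ {±∞}`. -/
def toE (i : ℤ) : EInt := ((i : WithTop ℤ) : WithBot (WithTop ℤ))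

/-- Membership of an integer in the extended interval `[a, b]`. -/
def memI (a b : EInt) (i : ℤ) : Prop := a ≤ toE i ∧ toE i ≤ b

/-- The interval zigzag persistence module `I^[a,b]` for `a ≤ b` in `ℤ ∪ {±∞}`:
it is `F` on indices in `[a,b]` and `0` elsewhere, with identity maps between
non-zero spaces. -/
noncomputable def interval (F : Type) [Field F] (a b : EInt) : Zigzag F where
  V i := PLift (memI a b i) → F
  acg i := inferInstance
  mod i := inferInstance
  f i _ := transferMap F LinearMap.id
  g i _ := transferMap F LinearMap.id

/-- The restriction of `M` to the index interval `[s,t]`, realized as the zigzag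
module agreeing with `M` on `[s,t]` and vanishing elsewhere (extension by zero;
this carries exactly the data of the restriction of `M` to the full subcategory
on `{s, …, t}`). -/
noncomputable def restrict (M : Zigzag F) (s t : ℤ) : Zigzag F where
  V i := PLift (s ≤ i ∧ i ≤ t) → M.V i
  acg i := inferInstance
  mod i := inferInstance
  f i h := transferMap F (M.f i h)
  g i h := transferMap F (M.g i h)

end Zigzag


open Zigzag in
/-- `V` is indecomposable iff `V` is `[-k,k]`-indecomposable for all `k ≥ 0`. -/
theorem stmt1 (F : Type) [Field F] (V : Zigzag F)
    (hfd : ∀ i, FiniteDimensional F (V.V i)) :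
    V.Indecomposable ↔ ∀ k : ℕ, V.IndecOn (-(k : ℤ)) (k : ℤ) := by
  constructor
  · rintro ⟨hnz, hdec⟩ k
    refine ⟨hnz, fun U W iso => ?_⟩
    rcases hdec U W iso with h | h
    · exact Or.inl fun i _ _ x => h i x
    · exact Or.inr fun i _ _ x => h i x
  · intro h
    refine ⟨(h 0).1, fun U W iso => ?_⟩
    by_contra hc
    push_neg at hc
    obtain ⟨hU, hW⟩ := hc
    simp only [Zigzag.IsZero, not_forall] at hU hW
    obtain ⟨i, x, hx⟩ := hU
    obtain ⟨j, y, hy⟩ := hW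
    set k : ℕ := (|i| ⊔ |j|).toNat with hk
    have hik : -(k : ℤ) ≤ i ∧ i ≤ (k : ℤ) := by
      constructor <;>
      · have h1 : |i| ≤ (k : ℤ) := by
          rw [hk, Int.toNat_of_nonneg (le_trans (abs_nonneg i) le_sup_left)]
          exact le_sup_left
        rw [abs_le] at h1; omega
    have hjk : -(k : ℤ) ≤ j ∧ j ≤ (k : ℤ) := by
      constructor <;>
      · have h1 : |j| ≤ (k : ℤ) := by
          rw [hk, Int.toNat_of_nonneg (le_trans (abs_nonneg i) le_sup_left)]
          exact le_sup_right
        rw [abs_le] at h1; omega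
    rcases (h k).2 U W iso with hv | hv
    · exact hx (hv i hik.1 hik.2 x)
    · exact hy (hv j hjk.1 hjk.2 y)
end

section
/- Every non-zero zigzag persistence module V admits, for each pair of integers s ≤ t, an [s,t]-decomposition: a direct sum decomposition V = ⨁_{j ∈ J} W^j in which each summand W^j is [s,t]-indecomposable. -/
open scoped DirectSum

namespace Zigzag
variable {F : Type} [Field F]
open DirectSum

def Iso.trans {A B C : Zigzag F} (e₁ : Iso A B) (e₂ : Iso B C) : Iso A C where
  e i := (e₁.e i).trans (e₂.e i)
  comm_f i h x := by simp [LinearEquiv.trans_apply, e₁.comm_f, e₂.comm_f]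
  comm_g i h x := by simp [LinearEquiv.trans_apply, e₁.comm_g, e₂.comm_g]

def Iso.symm {A B : Zigzag F} (e : Iso A B) : Iso B A where
  e i := (e.e i).symm
  comm_f i h x := by
    apply (e.e (i + 1)).injective
    simp [e.comm_f]
  comm_g i h x := by
    apply (e.e (i - 1)).injective
    simp [e.comm_g]

def Iso.dsumCongr {A A' B B' : Zigzag F} (e₁ : Iso A A') (e₂ : Iso B B') :
    Iso (A.dsum B) (A'.dsum B') where
  e i := (e₁.e i).prodCongr (e₂.e i)
  comm_f i h x := Prod.ext (e₁.comm_f i h x.1) (e₂.comm_f i h x.2)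
  comm_g i h x := Prod.ext (e₁.comm_g i h x.1) (e₂.comm_g i h x.2)

/-- `M ≃ ⨁ _ : PUnit, M` with Classical decEq baked in. -/
noncomputable def punitLEquiv (M : Type) [AddCommGroup M] [Module F M] :
    M ≃ₗ[F] ⨁ _ : PUnit.{1}, M :=
  letI := Classical.decEq PUnit.{1}
  LinearEquiv.ofLinear (DirectSum.lof F PUnit.{1} (fun _ => M) default)
    (DirectSum.toModule F PUnit.{1} M fun _ => LinearMap.id)
    (by
      apply DirectSum.linearMap_ext
      intro j
      ext x
      cases j
      simp [DirectSum.toModule_lof])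
    (by
      ext x
      simp [DirectSum.toModule_lof])

noncomputable def isoSingle (M : Zigzag F) : Iso M (dSum (fun _ : PUnit.{1} => M)) where
  e i := punitLEquiv (M.V i)
  comm_f i h x := by
    letI := Classical.decEq PUnit.{1}
    show DirectSum.lof F PUnit.{1} (fun _ => M.V (i + 1)) default (M.f i h x) = _
    simp only [dSum]
    erw [show (punitLEquiv (F := F) (M.V i)) x
      = DirectSum.lof F PUnit.{1} (fun _ => M.V i) default x from rfl]
    simp [DirectSum.toModule_lof]
    erw [DirectSum.toModule_lof]
    rfl
  comm_g i h x := by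
    letI := Classical.decEq PUnit.{1}
    show DirectSum.lof F PUnit.{1} (fun _ => M.V (i - 1)) default (M.g i h x) = _
    simp only [dSum]
    erw [show (punitLEquiv (F := F) (M.V i)) x
      = DirectSum.lof F PUnit.{1} (fun _ => M.V i) default x from rfl]
    simp [DirectSum.toModule_lof]
    erw [DirectSum.toModule_lof]
    rfl

end Zigzag
namespace Zigzag
variable {F : Type} [Field F]
open DirectSum

section SumEquiv
variable {J₁ J₂ : Type}

noncomputable def sumLEquiv (M : J₁ ⊕ J₂ → Type) [∀ j, AddCommGroup (M j)]
    [∀ j, Module F (M j)] :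
    (⨁ j, M j) ≃ₗ[F] (⨁ j₁, M (.inl j₁)) × (⨁ j₂, M (.inr j₂)) :=
  letI := Classical.decEq J₁
  letI := Classical.decEq J₂
  letI := Classical.decEq (J₁ ⊕ J₂)
  LinearEquiv.ofLinear
    (DirectSum.toModule F _ _ fun j => Sum.rec
      (fun j₁ => (LinearMap.inl F _ _).comp (DirectSum.lof F J₁ (fun k => M (.inl k)) j₁))
      (fun j₂ => (LinearMap.inr F _ _).comp (DirectSum.lof F J₂ (fun k => M (.inr k)) j₂)) j)
    (LinearMap.coprod
      (DirectSum.toModule F _ _ fun j₁ => DirectSum.lof F _ M (.inl j₁))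
      (DirectSum.toModule F _ _ fun j₂ => DirectSum.lof F _ M (.inr j₂)))
    (by
      apply LinearMap.prod_ext
      · apply DirectSum.linearMap_ext
        intro j
        ext x <;>
          simp only [LinearMap.comp_apply, DirectSum.toModule_lof, LinearMap.id_comp,
            LinearMap.inl_apply, LinearMap.inr_apply, LinearMap.coprod_apply, map_zero,
            add_zero, zero_add]
      · apply DirectSum.linearMap_ext
        intro j
        ext x <;>
          simp only [LinearMap.comp_apply, DirectSum.toModule_lof, LinearMap.id_comp,
            LinearMap.inl_apply, LinearMap.inr_apply, LinearMap.coprod_apply, map_zero,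
            add_zero, zero_add])
    (by
      apply DirectSum.linearMap_ext
      intro j
      ext x
      cases j <;> simp [DirectSum.toModule_lof])

end SumEquiv
end Zigzag
namespace Zigzag
variable {F : Type} [Field F]
open DirectSum

instance (priority := 100) {J : Type} : Subsingleton (DecidableEq J) := by
  constructor
  intro a b
  funext x y
  exact Subsingleton.elim _ _

section SumEquivLemmas
variable {J₁ J₂ : Type}

theorem dSum_f_lof {J : Type} [inst : DecidableEq J] (W : J → Zigzag F) (i : ℤ) (h : Even i)
    (j : J) (x : (W j).V i) :
    (dSum W).f i h (DirectSum.lof F J (fun j => (W j).V i) j x) =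
      DirectSum.lof F J (fun j => (W j).V (i + 1)) j ((W j).f i h x) := by
  rw [Subsingleton.elim inst (Classical.decEq J)]
  letI := Classical.decEq J
  show DirectSum.toModule F J _
      (fun j => (DirectSum.lof F J (fun j => (W j).V (i + 1)) j).comp ((W j).f i h))
      (DirectSum.lof F J (fun j => (W j).V i) j x) = _
  rw [DirectSum.toModule_lof]
  rfl

theorem dSum_g_lof {J : Type} [inst : DecidableEq J] (W : J → Zigzag F) (i : ℤ) (h : Even i)
    (j : J) (x : (W j).V i) :
    (dSum W).g i h (DirectSum.lof F J (fun j => (W j).V i) j x) =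
      DirectSum.lof F J (fun j => (W j).V (i - 1)) j ((W j).g i h x) := by
  rw [Subsingleton.elim inst (Classical.decEq J)]
  letI := Classical.decEq J
  show DirectSum.toModule F J _
      (fun j => (DirectSum.lof F J (fun j => (W j).V (i - 1)) j).comp ((W j).g i h))
      (DirectSum.lof F J (fun j => (W j).V i) j x) = _
  rw [DirectSum.toModule_lof]
  rfl

theorem sumLEquiv_lof_inl (M : J₁ ⊕ J₂ → Type) [∀ j, AddCommGroup (M j)]
    [∀ j, Module F (M j)] [inst₁ : DecidableEq J₁] [inst : DecidableEq (J₁ ⊕ J₂)]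
    (j₁ : J₁) (x : M (.inl j₁)) :
    sumLEquiv (F := F) M (DirectSum.lof F _ M (.inl j₁) x) =
      (DirectSum.lof F J₁ (fun k => M (.inl k)) j₁ x, 0) := by
  rw [Subsingleton.elim inst₁ (Classical.decEq J₁),
    Subsingleton.elim inst (Classical.decEq (J₁ ⊕ J₂))]
  letI := Classical.decEq J₁
  letI := Classical.decEq (J₁ ⊕ J₂)
  exact DirectSum.toModule_lof (ι := J₁ ⊕ J₂) F (Sum.inl j₁) x

theorem sumLEquiv_lof_inr (M : J₁ ⊕ J₂ → Type) [∀ j, AddCommGroup (M j)]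
    [∀ j, Module F (M j)] [inst₂ : DecidableEq J₂] [inst : DecidableEq (J₁ ⊕ J₂)]
    (j₂ : J₂) (x : M (.inr j₂)) :
    sumLEquiv (F := F) M (DirectSum.lof F _ M (.inr j₂) x) =
      (0, DirectSum.lof F J₂ (fun k => M (.inr k)) j₂ x) := by
  rw [Subsingleton.elim inst₂ (Classical.decEq J₂),
    Subsingleton.elim inst (Classical.decEq (J₁ ⊕ J₂))]
  letI := Classical.decEq J₂
  letI := Classical.decEq (J₁ ⊕ J₂)
  exact DirectSum.toModule_lof (ι := J₁ ⊕ J₂) F (Sum.inr j₂) x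

/-- `dSum` over a sum type is the binary `dsum` of the two `dSum`s. -/
noncomputable def isoSum (W₁ : J₁ → Zigzag F) (W₂ : J₂ → Zigzag F) :
    Iso (dSum (Sum.elim W₁ W₂)) ((dSum W₁).dsum (dSum W₂)) where
  e i := sumLEquiv (fun j => (Sum.elim W₁ W₂ j).V i)
  comm_f i h x := by
    letI := Classical.decEq J₁
    letI := Classical.decEq J₂
    letI := Classical.decEq (J₁ ⊕ J₂)
    have key : ((sumLEquiv (F := F) (fun j => (Sum.elim W₁ W₂ j).V (i + 1))).toLinearMap.comp
          ((dSum (Sum.elim W₁ W₂)).f i h)) =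
        (((dSum W₁).dsum (dSum W₂)).f i h).comp
          (sumLEquiv (fun j => (Sum.elim W₁ W₂ j).V i)).toLinearMap := by
      apply DirectSum.linearMap_ext
      rintro (j | j) <;> refine LinearMap.ext fun x => ?_
      · exact (congrArg (fun y => (sumLEquiv (F := F) fun j => (Sum.elim W₁ W₂ j).V (i + 1)) y)
            (dSum_f_lof (Sum.elim W₁ W₂) i h (.inl j) x)).trans
          (((sumLEquiv_lof_inl (fun j => (Sum.elim W₁ W₂ j).V (i + 1)) j
              ((Sum.elim W₁ W₂ (.inl j)).f i h x)).trans
            (congrArg₂ Prod.mk (dSum_f_lof W₁ i h j x).symm (map_zero ((dSum W₂).f i h)).symm)).trans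
          (congrArg (fun y => (((dSum W₁).dsum (dSum W₂)).f i h) y)
            (sumLEquiv_lof_inl (fun j => (Sum.elim W₁ W₂ j).V i) j x)).symm)
      · exact (congrArg (fun y => (sumLEquiv (F := F) fun j => (Sum.elim W₁ W₂ j).V (i + 1)) y)
            (dSum_f_lof (Sum.elim W₁ W₂) i h (.inr j) x)).trans
          (((sumLEquiv_lof_inr (fun j => (Sum.elim W₁ W₂ j).V (i + 1)) j
              ((Sum.elim W₁ W₂ (.inr j)).f i h x)).trans
            (congrArg₂ Prod.mk (map_zero ((dSum W₁).f i h)).symm (dSum_f_lof W₂ i h j x).symm)).trans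
          (congrArg (fun y => (((dSum W₁).dsum (dSum W₂)).f i h) y)
            (sumLEquiv_lof_inr (fun j => (Sum.elim W₁ W₂ j).V i) j x)).symm)
    exact LinearMap.congr_fun key x
  comm_g i h x := by
    letI := Classical.decEq J₁
    letI := Classical.decEq J₂
    letI := Classical.decEq (J₁ ⊕ J₂)
    have key : ((sumLEquiv (F := F) (fun j => (Sum.elim W₁ W₂ j).V (i - 1))).toLinearMap.comp
          ((dSum (Sum.elim W₁ W₂)).g i h)) =
        (((dSum W₁).dsum (dSum W₂)).g i h).comp
          (sumLEquiv (fun j => (Sum.elim W₁ W₂ j).V i)).toLinearMap := by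
      apply DirectSum.linearMap_ext
      rintro (j | j) <;> refine LinearMap.ext fun x => ?_
      · exact (congrArg (fun y => (sumLEquiv (F := F) fun j => (Sum.elim W₁ W₂ j).V (i - 1)) y)
            (dSum_g_lof (Sum.elim W₁ W₂) i h (.inl j) x)).trans
          (((sumLEquiv_lof_inl (fun j => (Sum.elim W₁ W₂ j).V (i - 1)) j
              ((Sum.elim W₁ W₂ (.inl j)).g i h x)).trans
            (congrArg₂ Prod.mk (dSum_g_lof W₁ i h j x).symm (map_zero ((dSum W₂).g i h)).symm)).trans
          (congrArg (fun y => (((dSum W₁).dsum (dSum W₂)).g i h) y)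
            (sumLEquiv_lof_inl (fun j => (Sum.elim W₁ W₂ j).V i) j x)).symm)
      · exact (congrArg (fun y => (sumLEquiv (F := F) fun j => (Sum.elim W₁ W₂ j).V (i - 1)) y)
            (dSum_g_lof (Sum.elim W₁ W₂) i h (.inr j) x)).trans
          (((sumLEquiv_lof_inr (fun j => (Sum.elim W₁ W₂ j).V (i - 1)) j
              ((Sum.elim W₁ W₂ (.inr j)).g i h x)).trans
            (congrArg₂ Prod.mk (map_zero ((dSum W₁).g i h)).symm (dSum_g_lof W₂ i h j x).symm)).trans
          (congrArg (fun y => (((dSum W₁).dsum (dSum W₂)).g i h) y)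
            (sumLEquiv_lof_inr (fun j => (Sum.elim W₁ W₂ j).V i) j x)).symm)
    exact LinearMap.congr_fun key x

end SumEquivLemmas
end Zigzag
namespace Zigzag

variable {F : Type} [Field F]

/-- Total dimension over `[s,t]`. -/
noncomputable def dimOn (M : Zigzag F) (s t : ℤ) : ℕ :=
  ∑ i ∈ Finset.Icc s t, Module.finrank F (M.V i)

theorem fd_left {U W V : Zigzag F} (e : Iso V (U.dsum W))
    (hfd : ∀ i, FiniteDimensional F (V.V i)) (i : ℤ) : FiniteDimensional F (U.V i) := by
  haveI := hfd i
  exact FiniteDimensional.of_injective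
    (((e.e i).symm.toLinearMap).comp (LinearMap.inl F (U.V i) (W.V i)))
    ((e.e i).symm.injective.comp LinearMap.inl_injective)

theorem fd_right {U W V : Zigzag F} (e : Iso V (U.dsum W))
    (hfd : ∀ i, FiniteDimensional F (V.V i)) (i : ℤ) : FiniteDimensional F (W.V i) := by
  haveI := hfd i
  exact FiniteDimensional.of_injective
    (((e.e i).symm.toLinearMap).comp (LinearMap.inr F (U.V i) (W.V i)))
    ((e.e i).symm.injective.comp LinearMap.inr_injective)

theorem dimOn_eq {U W V : Zigzag F} (e : Iso V (U.dsum W))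
    (hfd : ∀ i, FiniteDimensional F (V.V i)) (s t : ℤ) :
    dimOn V s t = dimOn U s t + dimOn W s t := by
  unfold dimOn
  rw [← Finset.sum_add_distrib]
  refine Finset.sum_congr rfl fun i _ => ?_
  haveI := hfd i
  haveI := fd_left e hfd i
  haveI := fd_right e hfd i
  have h1 : Module.finrank F (V.V i) = Module.finrank F (U.V i × W.V i) :=
    (e.e i).finrank_eq
  rw [h1, Module.finrank_prod]

theorem dimOn_pos {U : Zigzag F} (hfd : ∀ i, FiniteDimensional F (U.V i))
    {s t : ℤ} (h : ¬ U.VanishesOn s t) : 0 < dimOn U s t := by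
  unfold VanishesOn at h
  push_neg at h
  obtain ⟨i, hsi, hit, x, hx⟩ := h
  haveI := hfd i
  have hpos : 0 < Module.finrank F (U.V i) :=
    Module.finrank_pos_iff.mpr (nontrivial_of_ne x 0 hx)
  calc 0 < Module.finrank F (U.V i) := hpos
    _ ≤ dimOn U s t :=
      Finset.single_le_sum (f := fun i => Module.finrank F (U.V i))
        (fun j _ => Nat.zero_le _) (Finset.mem_Icc.mpr ⟨hsi, hit⟩)

theorem not_isZero_of_not_vanishes {U : Zigzag F} {s t : ℤ}
    (h : ¬ U.VanishesOn s t) : ¬ U.IsZero := fun hz =>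
  h fun i _ _ x => hz i x

theorem main_aux (s t : ℤ) : ∀ (n : ℕ) (V : Zigzag F),
    (∀ i, FiniteDimensional F (V.V i)) → ¬ V.IsZero → dimOn V s t = n →
    ∃ (J : Type) (W : J → Zigzag F),
      Nonempty (Iso V (dSum W)) ∧ ∀ j, (W j).IndecOn s t := by
  intro n
  induction n using Nat.strong_induction_on with
  | _ n ih =>
    intro V hfd hnz hdim
    by_cases hV : V.IndecOn s t
    · exact ⟨PUnit, fun _ => V, ⟨isoSingle V⟩, fun _ => hV⟩
    · unfold IndecOn at hV
      push_neg at hV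
      obtain ⟨U, W, e, hU, hW⟩ := hV hnz
      have hfdU := fd_left e hfd
      have hfdW := fd_right e hfd
      have hdU := dimOn_pos hfdU hU
      have hdW := dimOn_pos hfdW hW
      have hsum := dimOn_eq e hfd s t
      obtain ⟨J₁, W₁, ⟨e₁⟩, h₁⟩ := ih (dimOn U s t) (by omega) U hfdU
        (not_isZero_of_not_vanishes hU) rfl
      obtain ⟨J₂, W₂, ⟨e₂⟩, h₂⟩ := ih (dimOn W s t) (by omega) W hfdW
        (not_isZero_of_not_vanishes hW) rfl
      refine ⟨J₁ ⊕ J₂, Sum.elim W₁ W₂,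
        ⟨(e.trans (e₁.dsumCongr e₂)).trans (isoSum W₁ W₂).symm⟩, ?_⟩
      rintro (j₁ | j₂)
      · exact h₁ j₁
      · exact h₂ j₂

end Zigzag
open Zigzag in
/-- every non-zero zigzag persistence module admits an `[s,t]`-decomposition,
i.e. a direct sum decomposition in which every summand is `[s,t]`-indecomposable. -/
theorem stmt2 (F : Type) [Field F] (V : Zigzag F)
    (hfd : ∀ i, FiniteDimensional F (V.V i)) (hnz : ¬ V.IsZero)
    (s t : ℤ) (hst : s ≤ t) :
    ∃ (J : Type) (W : J → Zigzag F),
      Nonempty (Iso V (dSum W)) ∧ ∀ j, (W j).IndecOn s t :=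
  Zigzag.main_aux s t (Zigzag.dimOn V s t) V hfd hnz rfl
end

section
/- If V is an indecomposable zigzag persistence module, then there exists an integer t ≥ 0 such that f_i is injective and g_i is surjective for all i ≥ t; dually, there exists an integer s ≤ 0 such that f_i is surjective and g_i is injective for all i ≤ s. -/
open scoped DirectSum

namespace ZZaux

variable {F : Type} [Field F]

/-- Separating functional: if `v ∉ Z` there is a functional vanishing on `Z` with value 1 at `v`. -/
theorem exists_dual_sep {A : Type} [AddCommGroup A] [Module F A]
    (Z : Submodule F A) (v : A) (hv : v ∉ Z) :
    ∃ φ : Module.Dual F A, (∀ z ∈ Z, φ z = 0) ∧ φ v = 1 := by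
  have hvq : Z.mkQ v ≠ 0 := by
    simpa [Submodule.Quotient.mk_eq_zero] using hv
  have : ¬ (∀ ψ : Module.Dual F (A ⧸ Z), ψ (Z.mkQ v) = 0) := by
    rw [Module.forall_dual_apply_eq_zero_iff]; exact hvq
  push_neg at this
  obtain ⟨ψ, hψ⟩ := this
  refine ⟨(ψ (Z.mkQ v))⁻¹ • (ψ.comp Z.mkQ), ?_, ?_⟩
  · intro z hz
    have : Z.mkQ z = 0 := by simpa [Submodule.Quotient.mk_eq_zero] using hz
    simp [this]
  · show (ψ (Z.mkQ v))⁻¹ * ψ (Z.mkQ v) = 1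
    exact inv_mul_cancel₀ hψ

/-- Extension of a functional along a linear map, killing a prescribed subspace of the target. -/
theorem exists_dual_extend {A B : Type} [AddCommGroup A] [Module F A]
    [AddCommGroup B] [Module F B] (f : A →ₗ[F] B) (Z : Submodule F B)
    (μ : Module.Dual F A) (hμ : ∀ u, f u ∈ Z → μ u = 0) :
    ∃ ν : Module.Dual F B, (∀ z ∈ Z, ν z = 0) ∧ ∀ u, ν (f u) = μ u := by
  set g : A →ₗ[F] B ⧸ Z := Z.mkQ.comp f with hg
  have hker : LinearMap.ker g ≤ LinearMap.ker μ := by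
    intro u hu
    have : f u ∈ Z := by
      simpa [hg, Submodule.Quotient.mk_eq_zero] using hu
    simpa using hμ u this
  set μ' : (A ⧸ LinearMap.ker g) →ₗ[F] F := (LinearMap.ker g).liftQ μ hker with hμ'
  set h₀ : ↥(LinearMap.range g) →ₗ[F] F := μ'.comp (g.quotKerEquivRange.symm.toLinearMap) with hh
  obtain ⟨ψ, hψ⟩ := LinearMap.exists_extend h₀
  refine ⟨ψ.comp Z.mkQ, ?_, ?_⟩
  · intro z hz
    have : Z.mkQ z = 0 := by simpa [Submodule.Quotient.mk_eq_zero] using hz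
    simp [this]
  · intro u
    have h1 : g.quotKerEquivRange (Submodule.Quotient.mk u) = ⟨g u, LinearMap.mem_range_self g u⟩ := by
      ext; exact g.quotKerEquivRange_apply_mk u
    have h2 : g.quotKerEquivRange.symm ⟨g u, LinearMap.mem_range_self g u⟩
        = Submodule.Quotient.mk u := by
      rw [← h1]; exact g.quotKerEquivRange.symm_apply_apply _
    have h3 : ψ (g u) = h₀ ⟨g u, LinearMap.mem_range_self g u⟩ := by
      have := congrArg (fun m => m ⟨g u, LinearMap.mem_range_self g u⟩) hψ
      simpa using this
    have : ψ (g u) = μ u := by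
      rw [h3, hh]
      simp only [LinearMap.comp_apply, LinearEquiv.coe_coe]
      rw [h2, hμ']
      simp [Submodule.liftQ_apply]
    simpa [hg] using this
end ZZaux

namespace Zigzag

variable {F : Type} [Field F]

section Split

variable (V : Zigzag F)

/-- From a compatible idempotent family on an indecomposable zigzag module:
the family is zero or the identity. -/
theorem split_of_idem (hV : V.Indecomposable)
    (e : ∀ i, V.V i →ₗ[F] V.V i)
    (hf : ∀ (i : ℤ) (hi : Even i) (x : V.V i), e (i+1) (V.f i hi x) = V.f i hi (e i x))
    (hg : ∀ (i : ℤ) (hi : Even i) (x : V.V i), e (i-1) (V.g i hi x) = V.g i hi (e i x))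
    (hid : ∀ i x, e i (e i x) = e i x) :
    (∀ i x, e i x = 0) ∨ (∀ i (x : V.V i), e i x = x) := by
  classical
  set n : ∀ i, V.V i →ₗ[F] V.V i := fun i => LinearMap.id - e i with hn
  have hnf : ∀ (i : ℤ) (hi : Even i) (x : V.V i), n (i+1) (V.f i hi x) = V.f i hi (n i x) := by
    intro i hi x
    simp [hn, LinearMap.sub_apply, hf i hi x, map_sub]
  have hng : ∀ (i : ℤ) (hi : Even i) (x : V.V i), n (i-1) (V.g i hi x) = V.g i hi (n i x) := by
    intro i hi x
    simp [hn, LinearMap.sub_apply, hg i hi x, map_sub]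
  have memf : ∀ (i : ℤ) (hi : Even i), ∀ x ∈ LinearMap.range (e i),
      V.f i hi x ∈ LinearMap.range (e (i+1)) := by
    rintro i hi x ⟨y, rfl⟩
    exact ⟨V.f i hi y, hf i hi y⟩
  have memg : ∀ (i : ℤ) (hi : Even i), ∀ x ∈ LinearMap.range (e i),
      V.g i hi x ∈ LinearMap.range (e (i-1)) := by
    rintro i hi x ⟨y, rfl⟩
    exact ⟨V.g i hi y, hg i hi y⟩
  have memfn : ∀ (i : ℤ) (hi : Even i), ∀ x ∈ LinearMap.range (n i),
      V.f i hi x ∈ LinearMap.range (n (i+1)) := by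
    rintro i hi x ⟨y, rfl⟩
    exact ⟨V.f i hi y, hnf i hi y⟩
  have memgn : ∀ (i : ℤ) (hi : Even i), ∀ x ∈ LinearMap.range (n i),
      V.g i hi x ∈ LinearMap.range (n (i-1)) := by
    rintro i hi x ⟨y, rfl⟩
    exact ⟨V.g i hi y, hng i hi y⟩
  set U : Zigzag F :=
    { V := fun i => ↥(LinearMap.range (e i))
      acg := fun i => inferInstance
      mod := fun i => inferInstance
      f := fun i hi => (V.f i hi).restrict (memf i hi)
      g := fun i hi => (V.g i hi).restrict (memg i hi) } with hU
  set W : Zigzag F :=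
    { V := fun i => ↥(LinearMap.range (n i))
      acg := fun i => inferInstance
      mod := fun i => inferInstance
      f := fun i hi => (V.f i hi).restrict (memfn i hi)
      g := fun i hi => (V.g i hi).restrict (memgn i hi) } with hW
  have hidn : ∀ i (x : V.V i), x ∈ LinearMap.range (e i) → e i x = x := by
    rintro i x ⟨y, rfl⟩; exact hid i y
  have hzn : ∀ i (x : V.V i), x ∈ LinearMap.range (n i) → e i x = 0 := by
    rintro i x ⟨y, rfl⟩
    simp [hn, LinearMap.sub_apply, map_sub, hid i y]
  set iso : V.Iso (U.dsum W) :=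
    { e := fun i =>
        { toFun := fun v => (⟨e i v, LinearMap.mem_range_self _ v⟩, ⟨n i v, LinearMap.mem_range_self _ v⟩)
          map_add' := by
            intro a b
            refine Prod.ext (Subtype.ext ?_) (Subtype.ext ?_)
            · exact map_add (e i) a b
            · exact map_add (n i) a b
          map_smul' := by
            intro c a
            refine Prod.ext (Subtype.ext ?_) (Subtype.ext ?_)
            · exact map_smul (e i) c a
            · exact map_smul (n i) c a
          invFun := fun p => p.1.1 + p.2.1
          left_inv := by intro v; simp [hn, LinearMap.sub_apply]
          right_inv := by
            rintro ⟨u, w⟩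
            have h1 : e i (u.1 + w.1) = u.1 := by
              rw [map_add, hidn i u.1 u.2, hzn i w.1 w.2, add_zero]
            have h2 : n i (u.1 + w.1) = w.1 := by
              simp only [hn, LinearMap.sub_apply, LinearMap.id_apply]
              rw [h1]; abel
            refine Prod.ext (Subtype.ext ?_) (Subtype.ext ?_)
            · exact h1
            · exact h2 }
      comm_f := by
        intro i hi x
        refine Prod.ext (Subtype.ext ?_) (Subtype.ext ?_)
        · exact hf i hi x
        · exact hnf i hi x
      comm_g := by
        intro i hi x
        refine Prod.ext (Subtype.ext ?_) (Subtype.ext ?_)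
        · exact hg i hi x
        · exact hng i hi x }
  rcases hV.2 U W iso with h | h
  · left
    intro i x
    have := h i ⟨e i x, LinearMap.mem_range_self _ x⟩
    exact congrArg Subtype.val this
  · right
    intro i x
    have := h i ⟨n i x, LinearMap.mem_range_self _ x⟩
    have hx : n i x = 0 := congrArg Subtype.val this
    have : x - e i x = 0 := by simpa [hn, LinearMap.sub_apply] using hx
    have := sub_eq_zero.mp this; exact this.symm

end Split

end Zigzag

namespace Zigzag

variable {F : Type} [Field F]

section Threads

variable (V : Zigzag F) (b : ℤ)

/-- A downward thread on the window `[a, b]`: a total family satisfying the zigzag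
compatibility conditions inside the window. -/
def ThreadOn (x : ∀ j, V.V j) (a : ℤ) : Prop :=
  ∀ (j : ℤ) (hj : Even j),
    (a ≤ j → j < b → V.f j hj (x j) = x (j+1)) ∧
    (a < j → j ≤ b → x (j-1) = V.g j hj (x j))

/-- A downward family of functionals compatible on the window `[a, b]`. -/
def CoThreadOn (lam : ∀ j, Module.Dual F (V.V j)) (a : ℤ) : Prop :=
  ∀ (j : ℤ) (hj : Even j),
    (a ≤ j → j < b → ∀ u, lam (j+1) (V.f j hj u) = lam j u) ∧
    (a < j → j ≤ b → ∀ u, lam (j-1) (V.g j hj u) = lam j u)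

variable {V b}

theorem ThreadOn.mono {x : ∀ j, V.V j} {a a' : ℤ} (h : ThreadOn V b x a) (haa : a ≤ a') :
    ThreadOn V b x a' := by
  intro j hj
  exact ⟨fun h1 h2 => (h j hj).1 (le_trans haa h1) h2,
         fun h1 h2 => (h j hj).2 (lt_of_le_of_lt haa h1) h2⟩

theorem ThreadOn.add {x y : ∀ j, V.V j} {a : ℤ} (hx : ThreadOn V b x a) (hy : ThreadOn V b y a) :
    ThreadOn V b (fun j => x j + y j) a := by
  intro j hj
  constructor
  · intro h1 h2
    rw [map_add, (hx j hj).1 h1 h2, (hy j hj).1 h1 h2]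
  · intro h1 h2
    rw [map_add, ← (hx j hj).2 h1 h2, ← (hy j hj).2 h1 h2]

theorem ThreadOn.smul {x : ∀ j, V.V j} {a : ℤ} (c : F) (hx : ThreadOn V b x a) :
    ThreadOn V b (fun j => c • x j) a := by
  intro j hj
  constructor
  · intro h1 h2
    rw [map_smul, (hx j hj).1 h1 h2]
  · intro h1 h2
    rw [map_smul, ← (hx j hj).2 h1 h2]

theorem ThreadOn.neg {x : ∀ j, V.V j} {a : ℤ} (hx : ThreadOn V b x a) :
    ThreadOn V b (fun j => - x j) a := by
  intro j hj
  constructor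
  · intro h1 h2
    rw [map_neg, (hx j hj).1 h1 h2]
  · intro h1 h2
    rw [map_neg, ← (hx j hj).2 h1 h2]

theorem ThreadOn.sub {x y : ∀ j, V.V j} {a : ℤ} (hx : ThreadOn V b x a) (hy : ThreadOn V b y a) :
    ThreadOn V b (fun j => x j - y j) a := by
  have := hx.add hy.neg
  simpa [sub_eq_add_neg] using this

theorem ThreadOn.zero {a : ℤ} : ThreadOn V b (fun j => (0 : V.V j)) a := by
  intro j hj
  constructor
  · intro _ _; rw [map_zero]
  · intro _ _; rw [map_zero]

/-- The trivial thread with a single prescribed value. -/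
theorem ThreadOn.single (v : V.V b) :
    ThreadOn V b (Function.update (fun j => (0 : V.V j)) b v) b := by
  intro j hj
  constructor
  · intro h1 h2; omega
  · intro h1 h2; omega

/-- Extending a thread one step down through an even index `a` (forced by `g`). -/
theorem ThreadOn.extend_even {x : ∀ j, V.V j} {a : ℤ} (hx : ThreadOn V b x a)
    (ha : Even a) (hab : a ≤ b) :
    ThreadOn V b (Function.update x (a-1) (V.g a ha (x a))) (a-1) := by
  intro j hj
  obtain ⟨p, hp⟩ := ha
  obtain ⟨q, hq⟩ := hj
  constructor
  · intro h1 h2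
    have hne1 : j ≠ a - 1 := by omega
    have hne2 : j + 1 ≠ a - 1 := by omega
    rw [Function.update_of_ne hne1, Function.update_of_ne hne2]
    exact (hx j ⟨q, hq⟩).1 (by omega) h2
  · intro h1 h2
    by_cases hja : j = a
    · subst hja
      rw [Function.update_self, Function.update_of_ne (show j ≠ j - 1 by omega)]
    · have hne1 : j - 1 ≠ a - 1 := by omega
      have hne2 : j ≠ a - 1 := by omega
      rw [Function.update_of_ne hne1, Function.update_of_ne hne2]
      exact (hx j ⟨q, hq⟩).2 (by omega) h2

/-- Extending a thread one step down through an odd index `j+1` by an `f`-lift at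
the even index `j`. -/
theorem ThreadOn.extend_lift {x : ∀ j, V.V j} {j : ℤ} (hj : Even j) (hjb : j < b)
    (hx : ThreadOn V b x (j+1)) (u : V.V j) (hu : V.f j hj u = x (j+1)) :
    ThreadOn V b (Function.update x j u) j := by
  intro j' hj'
  obtain ⟨p, hp⟩ := hj
  obtain ⟨q, hq⟩ := hj'
  constructor
  · intro h1 h2
    by_cases hja : j' = j
    · subst hja
      rw [Function.update_self, Function.update_of_ne (show j' + 1 ≠ j' by omega)]
      exact hu
    · have hne2 : j' + 1 ≠ j := by omega
      rw [Function.update_of_ne hja, Function.update_of_ne hne2]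
      exact (hx j' ⟨q, hq⟩).1 (by omega) h2
  · intro h1 h2
    have hne1 : j' - 1 ≠ j := by omega
    have hne2 : j' ≠ j := by omega
    rw [Function.update_of_ne hne1, Function.update_of_ne hne2]
    exact (hx j' ⟨q, hq⟩).2 (by omega) h2

end Threads

end Zigzag

namespace Zigzag

variable {F : Type} [Field F]

section Zsub

variable (V : Zigzag F) (b : ℤ)

/-- Values at `a` of threads on `[a,b]` whose top value lies in `W`. -/
def Zsub (W : Submodule F (V.V b)) (a : ℤ) : Submodule F (V.V a) where
  carrier := {v | ∃ x, ThreadOn V b x a ∧ x b ∈ W ∧ x a = v}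
  add_mem' := by
    rintro u v ⟨x, hx, hxb, rfl⟩ ⟨y, hy, hyb, rfl⟩
    exact ⟨fun j => x j + y j, hx.add hy, W.add_mem hxb hyb, rfl⟩
  zero_mem' := ⟨fun j => 0, ThreadOn.zero, W.zero_mem, rfl⟩
  smul_mem' := by
    rintro c v ⟨x, hx, hxb, rfl⟩
    exact ⟨fun j => c • x j, hx.smul c, W.smul_mem c hxb, rfl⟩

variable {V b}
variable {W : Submodule F (V.V b)}

theorem Zsub_top {v : V.V b} : v ∈ Zsub V b W b ↔ v ∈ W := by
  constructor
  · rintro ⟨x, hx, hxb, rfl⟩; exact hxb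
  · intro hv
    refine ⟨Function.update (fun j => (0 : V.V j)) b v, ThreadOn.single v, ?_, ?_⟩
    · rw [Function.update_self]; exact hv
    · rw [Function.update_self]

theorem Zsub_up_f {j : ℤ} (hj : Even j) (hjb : j < b) {v : V.V j} (hv : v ∈ Zsub V b W j) :
    V.f j hj v ∈ Zsub V b W (j+1) := by
  obtain ⟨x, hx, hxb, rfl⟩ := hv
  exact ⟨x, hx.mono (by omega), hxb, ((hx j hj).1 le_rfl hjb).symm⟩

theorem Zsub_down_f {j : ℤ} (hj : Even j) (hjb : j < b) {v : V.V j}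
    (hv : V.f j hj v ∈ Zsub V b W (j+1)) : v ∈ Zsub V b W j := by
  obtain ⟨x, hx, hxb, hxa⟩ := hv
  refine ⟨Function.update x j v, hx.extend_lift hj hjb v hxa.symm, ?_, ?_⟩
  · rw [Function.update_of_ne (show b ≠ j by omega)]; exact hxb
  · rw [Function.update_self]

theorem Zsub_down_g {a : ℤ} (ha : Even a) (hab : a ≤ b) {v : V.V a} (hv : v ∈ Zsub V b W a) :
    V.g a ha v ∈ Zsub V b W (a-1) := by
  obtain ⟨x, hx, hxb, rfl⟩ := hv
  refine ⟨Function.update x (a-1) (V.g a ha (x a)), hx.extend_even ha hab, ?_, ?_⟩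
  · rw [Function.update_of_ne (show b ≠ a - 1 by omega)]; exact hxb
  · rw [Function.update_self]

theorem CoThreadOn.mono {lam : ∀ j, Module.Dual F (V.V j)} {a a' : ℤ}
    (h : CoThreadOn V b lam a) (haa : a ≤ a') : CoThreadOn V b lam a' := by
  intro j hj
  exact ⟨fun h1 h2 => (h j hj).1 (le_trans haa h1) h2,
         fun h1 h2 => (h j hj).2 (lt_of_le_of_lt haa h1) h2⟩

/-- The pairing `lam j (x j)` is constant along a window. -/
theorem const_along {x : ∀ j, V.V j} {lam : ∀ j, Module.Dual F (V.V j)} {a : ℤ}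
    (hx : ThreadOn V b x a) (hl : CoThreadOn V b lam a) :
    ∀ j, a ≤ j → j ≤ b → lam j (x j) = lam b (x b) := by
  have key : ∀ n : ℕ, ∀ j, j = b - n → a ≤ j → lam j (x j) = lam b (x b) := by
    intro n
    induction n with
    | zero =>
      intro j hjb _
      have hj : j = b := by omega
      rw [hj]
    | succ n ih =>
      intro j hjb haj
      have hjb' : j < b := by omega
      have ihj : lam (j+1) (x (j+1)) = lam b (x b) := ih (j+1) (by omega) (by omega)
      rcases Int.even_or_odd j with hj | hj
      · have h1 := (hx j hj).1 haj hjb'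
        have h2 := (hl j hj).1 haj hjb' (x j)
        rw [← ihj, ← h1, h2]
      · have hj1 : Even (j+1) := by
          rcases hj with ⟨m, hm⟩; exact ⟨m+1, by omega⟩
        have h1 := (hx (j+1) hj1).2 (by omega) (by omega)
        have h2 := (hl (j+1) hj1).2 (by omega) (by omega) (x (j+1))
        have h3 : lam (j+1-1) (x (j+1-1)) = lam (j+1) (x (j+1)) := by
          rw [h1, h2]
        rw [show j + 1 - 1 = j from by omega] at h3
        rw [h3, ihj]
  intro j haj hjb
  exact key (b - j).toNat j (by omega) haj

/-- Upward extension of a bottom functional killing the junk spaces to a full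
compatible family on `[c,b]`. -/
theorem upext :
    ∀ n : ℕ, ∀ c, c = b - n → ∀ lam₀ : (∀ j, Module.Dual F (V.V j)),
    (∀ z ∈ Zsub V b W c, lam₀ c z = 0) →
    ∃ lam : ∀ j, Module.Dual F (V.V j), lam c = lam₀ c ∧ CoThreadOn V b lam c ∧
      (∀ j, c ≤ j → j ≤ b → ∀ z ∈ Zsub V b W j, lam j z = 0) := by
  intro n
  induction n with
  | zero =>
    intro c hc lam₀ h0
    have hcb : c = b := by omega
    refine ⟨lam₀, rfl, ?_, ?_⟩
    · intro j hj
      refine ⟨?_, ?_⟩ <;> (intro h1 h2; omega)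
    · intro j h1 h2
      have hj : j = c := by omega
      rw [hj]
      exact h0
  | succ n ih =>
    intro c hc lam₀ h0
    have hcb : c < b := by omega
    rcases Int.even_or_odd c with hcev | hcodd
    · -- even `c`: extend along `f c` by the Hahn-Banach style extension
      obtain ⟨ν, hν1, hν2⟩ := ZZaux.exists_dual_extend (V.f c hcev) (Zsub V b W (c+1)) (lam₀ c)
        (fun u hu => h0 u (Zsub_down_f hcev hcb hu))
      obtain ⟨lam', hl1, hl2, hl3⟩ := ih (c+1) (by omega) (Function.update lam₀ (c+1) ν)
        (by rw [Function.update_self]; exact hν1)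
      rw [Function.update_self] at hl1
      refine ⟨fun t => if t ≤ c then lam₀ t else lam' t, by simp, ?_, ?_⟩
      · intro j hj
        obtain ⟨p, hp⟩ := hcev
        obtain ⟨q, hq⟩ := hj
        constructor
        · intro h1 h2 u
          dsimp only
          by_cases hjc : j = c
          · subst hjc
            rw [if_neg (show ¬ (j + 1 ≤ j) by omega), if_pos (le_refl j), hl1, hν2]
          · have hj1 : c + 1 ≤ j := by omega
            rw [if_neg (show ¬ (j + 1 ≤ c) by omega), if_neg (show ¬ (j ≤ c) by omega)]
            exact (hl2 j ⟨q, hq⟩).1 hj1 h2 u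
        · intro h1 h2 u
          dsimp only
          have hj1 : c + 1 < j := by omega
          rw [if_neg (show ¬ (j - 1 ≤ c) by omega), if_neg (show ¬ (j ≤ c) by omega)]
          exact (hl2 j ⟨q, hq⟩).2 hj1 h2 u
      · intro j h1 h2 z hz
        dsimp only
        by_cases hjc : j = c
        · subst hjc
          rw [if_pos (le_refl j)]
          exact h0 z hz
        · rw [if_neg (show ¬ (j ≤ c) by omega)]
          exact hl3 j (by omega) h2 z hz
    · -- odd `c`: the value at `c+1` is forced by composing with `g (c+1)`
      have hc1 : Even (c+1) := by
        rcases hcodd with ⟨m, hm⟩; exact ⟨m+1, by omega⟩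
      have h0' : ∀ z ∈ Zsub V b W (c+1-1), lam₀ (c+1-1) z = 0 := by
        rw [show c + 1 - 1 = c from by omega]
        exact h0
      set ν : Module.Dual F (V.V (c+1)) := (lam₀ (c+1-1)).comp (V.g (c+1) hc1) with hν
      have hνk : ∀ z ∈ Zsub V b W (c+1), ν z = 0 := by
        intro z hz
        exact h0' _ (Zsub_down_g hc1 (by omega) hz)
      obtain ⟨lam', hl1, hl2, hl3⟩ := ih (c+1) (by omega) (Function.update lam₀ (c+1) ν)
        (by rw [Function.update_self]; exact hνk)
      rw [Function.update_self] at hl1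
      refine ⟨fun t => if t ≤ c then lam₀ t else lam' t, by simp, ?_, ?_⟩
      · intro j hj
        obtain ⟨p, hp⟩ := hcodd
        obtain ⟨q, hq⟩ := hj
        constructor
        · intro h1 h2 u
          dsimp only
          have hj1 : c + 1 ≤ j := by omega
          rw [if_neg (show ¬ (j + 1 ≤ c) by omega), if_neg (show ¬ (j ≤ c) by omega)]
          exact (hl2 j ⟨q, hq⟩).1 hj1 h2 u
        · intro h1 h2 u
          dsimp only
          by_cases hjc : j = c + 1
          · subst hjc
            rw [if_pos (show c + 1 - 1 ≤ c by omega), if_neg (show ¬ (c + 1 ≤ c) by omega), hl1, hν]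
            rfl
          · have hj1 : c + 1 < j := by omega
            rw [if_neg (show ¬ (j - 1 ≤ c) by omega), if_neg (show ¬ (j ≤ c) by omega)]
            exact (hl2 j ⟨q, hq⟩).2 hj1 h2 u
      · intro j h1 h2 z hz
        dsimp only
        by_cases hjc : j = c
        · subst hjc
          rw [if_pos (le_refl j)]
          exact h0 z hz
        · rw [if_neg (show ¬ (j ≤ c) by omega)]
          exact hl3 j (by omega) h2 z hz

end Zsub

end Zigzag

namespace Zigzag

variable {F : Type} [Field F]

/-- From a solution datum `(x, lam)` (thread + compatible functionals, with optional
bottom `A` and boundary conditions) on an indecomposable module: everything above `b`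
vanishes. -/
theorem vanish_of_sol (V : Zigzag F) (hV : V.Indecomposable) (b : ℤ)
    (x : ∀ j, V.V j) (lam : ∀ j, Module.Dual F (V.V j)) (A : Option ℤ)
    (hAb : ∀ a ∈ A, a ≤ b)
    (hsupp : ∀ j, ¬ (j ≤ b ∧ ∀ a ∈ A, a ≤ j) → x j = 0 ∧ lam j = 0)
    (hwin : ∀ a' : ℤ, (∀ a ∈ A, a ≤ a') → ThreadOn V b x a' ∧ CoThreadOn V b lam a')
    (hone : ∀ j, j ≤ b → (∀ a ∈ A, a ≤ j) → lam j (x j) = 1)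
    (htopF : ∀ h : Even b, V.f b h (x b) = 0)
    (htopG : ∀ (h : Even (b+1)) (u : V.V (b+1)), lam (b+1-1) (V.g (b+1) h u) = 0)
    (hbot : ∀ a ∈ A, (∀ h : Even a, V.g a h (x a) = 0) ∧
        (∀ (h : Even (a-1)) (u : V.V (a-1)), lam (a-1+1) (V.f (a-1) h u) = 0)) :
    ∀ j, b < j → ∀ v : V.V j, v = 0 := by
  classical
  set e : ∀ i, V.V i →ₗ[F] V.V i := fun i => (lam i).smulRight (x i) with he
  have happ : ∀ i (v : V.V i), e i v = lam i v • x i := fun i v => rfl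
  have hid : ∀ i (v : V.V i), e i (e i v) = e i v := by
    intro i v
    rw [happ, happ, map_smul, smul_eq_mul, mul_comm, mul_smul]
    by_cases hsup : i ≤ b ∧ ∀ a ∈ A, a ≤ i
    · rw [hone i hsup.1 hsup.2, one_smul]
    · rw [(hsupp i hsup).1, smul_zero, smul_zero]
  have hf : ∀ (i : ℤ) (hi : Even i) (v : V.V i), e (i+1) (V.f i hi v) = V.f i hi (e i v) := by
    intro i hi v
    rw [happ, happ, map_smul]
    cases A with
    | none =>
      by_cases h1 : i < b
      · obtain ⟨ht, hc⟩ := hwin i (by simp)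
        rw [(hc i hi).1 le_rfl h1 v, (ht i hi).1 le_rfl h1]
      · by_cases h2 : i = b
        · subst h2
          rw [(hsupp (i+1) (by intro hcon; omega)).1, smul_zero, htopF hi, smul_zero]
        · rw [(hsupp (i+1) (by intro hcon; omega)).1, smul_zero,
             (hsupp i (by intro hcon; omega)).1, map_zero, smul_zero]
    | some a =>
      by_cases h0 : i + 1 < a
      · rw [(hsupp (i+1) (by intro hcon; have := hcon.2 a rfl; omega)).2]
        rw [(hsupp i (by intro hcon; have := hcon.2 a rfl; omega)).1]
        simp
      · by_cases h0' : i + 1 = a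
        · have ha : a = i + 1 := h0'.symm
          subst ha
          obtain ⟨hb1, hb2⟩ := hbot (i+1) rfl
          rw [show i + 1 - 1 = i from by omega] at hb2
          rw [hb2 hi v, zero_smul]
          rw [(hsupp i (by intro hcon; have := hcon.2 (i+1) rfl; omega)).1, map_zero, smul_zero]
        · -- a ≤ i
          have ha : a ≤ i := by omega
          by_cases h1 : i < b
          · obtain ⟨ht, hc⟩ := hwin a (by simpa using le_rfl)
            rw [(hc i hi).1 ha h1 v, (ht i hi).1 ha h1]
          · by_cases h2 : i = b
            · subst h2
              rw [(hsupp (i+1) (by intro hcon; omega)).1, smul_zero, htopF hi, smul_zero]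
            · rw [(hsupp (i+1) (by intro hcon; omega)).1, smul_zero,
                 (hsupp i (by intro hcon; omega)).1, map_zero, smul_zero]
  have hg : ∀ (i : ℤ) (hi : Even i) (v : V.V i), e (i-1) (V.g i hi v) = V.g i hi (e i v) := by
    intro i hi v
    rw [happ, happ, map_smul]
    have hgen : ∀ (hin : (∀ a ∈ A, a < i) ∧ i ≤ b),
        lam (i-1) (V.g i hi v) • x (i-1) = lam i v • V.g i hi (x i) := by
      intro hin
      obtain ⟨ht, hc⟩ := hwin (i-1) (by intro a ha; have := hin.1 a ha; omega)
      rw [(hc i hi).2 (by omega) hin.2 v, (ht i hi).2 (by omega) hin.2]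
    cases A with
    | none =>
      by_cases h1 : i ≤ b
      · exact hgen ⟨by simp, h1⟩
      · by_cases h2 : i = b + 1
        · subst h2
          rw [htopG hi v, zero_smul, (hsupp (b+1) (by intro hcon; omega)).2]
          simp
        · rw [(hsupp (i-1) (by intro hcon; omega)).1, smul_zero,
             (hsupp i (by intro hcon; omega)).2]
          simp
    | some a =>
      by_cases h0 : i < a
      · rw [(hsupp (i-1) (by intro hcon; have := hcon.2 a rfl; omega)).1, smul_zero]
        rw [(hsupp i (by intro hcon; have := hcon.2 a rfl; omega)).2]
        simp
      · by_cases h0' : i = a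
        · subst h0'
          obtain ⟨hb1, hb2⟩ := hbot i rfl
          rw [hb1 hi, smul_zero, (hsupp (i-1) (by intro hcon; have := hcon.2 i rfl; omega)).1,
            smul_zero]
        · by_cases h1 : i ≤ b
          · exact hgen ⟨by intro a' ha'; simp at ha'; omega, h1⟩
          · by_cases h2 : i = b + 1
            · subst h2
              rw [htopG hi v, zero_smul, (hsupp (b+1) (by intro hcon; omega)).2]
              simp
            · rw [(hsupp (i-1) (by intro hcon; omega)).1, smul_zero,
                 (hsupp i (by intro hcon; omega)).2]
              simp
  have hxbne : x b ≠ 0 := by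
    intro hxb
    have h1 := hone b le_rfl hAb
    rw [hxb, map_zero] at h1
    exact zero_ne_one h1
  rcases V.split_of_idem hV e hf hg hid with hz | hidm
  · exfalso
    apply hxbne
    have := hz b (x b)
    rw [happ, hone b le_rfl hAb, one_smul] at this
    exact this
  · intro j hj v
    have := hidm j v
    rw [happ, (hsupp j (by intro hcon; omega)).1, smul_zero] at this
    exact this.symm

end Zigzag

namespace Zigzag

variable {F : Type} [Field F]

section Crux

variable {V : Zigzag F} {b : ℤ} {K W : Submodule F (V.V b)}

/-- The crux induction: if there is no usable even or odd death anywhere, then every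
window `[a,b]` carries a `K`-topped thread whose bottom avoids the junk space. -/
theorem crux (hWK : W ≤ K) {k : V.V b} (hkK : k ∈ K) (hkW : k ∉ W)
    (hE : ∀ (a : ℤ) (ha : Even a), a ≤ b → ∀ x, ThreadOn V b x a → x b ∈ K →
      V.g a ha (x a) = 0 → x a ∈ Zsub V b W a)
    (hOD : ∀ (c : ℤ) (hc : Even c), c < b → ∀ x, ThreadOn V b x (c+1) → x b ∈ K →
      ∃ z ∈ Zsub V b W (c+1), ∃ u, x (c+1) = z + V.f c hc u) :
    ∀ n : ℕ, ∀ a : ℤ, a = b - n →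
      ∃ x, ThreadOn V b x a ∧ x b ∈ K ∧ x a ∉ Zsub V b W a := by
  intro n
  induction n with
  | zero =>
    intro a haeq
    rw [show a = b from by omega]
    refine ⟨Function.update (fun j => (0 : V.V j)) b k, ThreadOn.single k, ?_, ?_⟩
    · rw [Function.update_self]; exact hkK
    · rw [Function.update_self]
      intro hmem
      exact hkW (Zsub_top.mp hmem)
  | succ n ih =>
    intro a haeq
    obtain ⟨x, hx, hxb, hxa⟩ := ih (a+1) (by omega)
    have hab : a + 1 ≤ b := by omega
    rcases Int.even_or_odd (a+1) with hev | hodd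
    · -- the step index `a+1` is even: the extension is forced by `g (a+1)`
      rw [show a = a + 1 - 1 from by omega]
      refine ⟨Function.update x (a+1-1) (V.g (a+1) hev (x (a+1))), hx.extend_even hev hab, ?_, ?_⟩
      · rw [Function.update_of_ne (show b ≠ a+1-1 from by omega)]; exact hxb
      · rw [Function.update_self]
        intro hmem
        obtain ⟨S, hS, hSb, hSa⟩ := hmem
        have hSg : S (a+1-1) = V.g (a+1) hev (S (a+1)) := (hS (a+1) hev).2 (by omega) hab
        have hnmem : x (a+1) - S (a+1) ∉ Zsub V b W (a+1) := by
          intro hmem2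
          apply hxa
          rw [← sub_add_cancel (x (a+1)) (S (a+1))]
          exact (Zsub V b W (a+1)).add_mem hmem2 ⟨S, hS.mono (by omega), hSb, rfl⟩
        refine hnmem ?_
        have := hE (a+1) hev hab (fun j => x j - S j) (hx.sub (hS.mono (by omega)))
          (K.sub_mem hxb (hWK hSb)) ?_
        · exact this
        · rw [map_sub, ← hSg, hSa, sub_self]
    · -- the step index `a+1` is odd: use the no-odd-death hypothesis to find a lift
      have ha : Even a := by
        rcases hodd with ⟨m, hm⟩; exact ⟨m, by omega⟩
      obtain ⟨z, hz, u, hu⟩ := hOD a ha (by omega) x hx hxb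
      obtain ⟨S, hS, hSb, hSz⟩ := hz
      have hDthread : ThreadOn V b (fun j => x j - S j) (a+1) := hx.sub hS
      have hfu : V.f a ha u = x (a+1) - S (a+1) := by
        rw [hu, hSz]; abel
      refine ⟨Function.update (fun j => x j - S j) a u,
        hDthread.extend_lift ha (by omega) u hfu, ?_, ?_⟩
      · rw [Function.update_of_ne (show b ≠ a from by omega)]
        exact K.sub_mem hxb (hWK hSb)
      · rw [Function.update_self]
        intro humem
        have hfmem := Zsub_up_f ha (by omega) humem
        apply hxa
        rw [hu]
        exact (Zsub V b W (a+1)).add_mem ⟨S, hS, hSb, hSz⟩ hfmem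

end Crux

end Zigzag

namespace Zigzag

variable {F : Type} [Field F]

section ML

variable {V : Zigzag F} {b : ℤ}

theorem CoThreadOn.add {lam mu : ∀ j, Module.Dual F (V.V j)} {a : ℤ}
    (hl : CoThreadOn V b lam a) (hm : CoThreadOn V b mu a) :
    CoThreadOn V b (fun j => lam j + mu j) a := by
  intro j hj
  constructor
  · intro h1 h2 u
    simp only [LinearMap.add_apply]
    rw [(hl j hj).1 h1 h2 u, (hm j hj).1 h1 h2 u]
  · intro h1 h2 u
    simp only [LinearMap.add_apply]
    rw [(hl j hj).2 h1 h2 u, (hm j hj).2 h1 h2 u]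

theorem CoThreadOn.smul {lam : ∀ j, Module.Dual F (V.V j)} {a : ℤ} (c : F)
    (hl : CoThreadOn V b lam a) : CoThreadOn V b (fun j => c • lam j) a := by
  intro j hj
  constructor
  · intro h1 h2 u
    simp only [LinearMap.smul_apply]
    rw [(hl j hj).1 h1 h2 u]
  · intro h1 h2 u
    simp only [LinearMap.smul_apply]
    rw [(hl j hj).2 h1 h2 u]

theorem CoThreadOn.zero {a : ℤ} : CoThreadOn V b (fun j => (0 : Module.Dual F (V.V j))) a := by
  intro j hj
  constructor
  · intro h1 h2 u; simp
  · intro h1 h2 u; simp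

variable (V b)

/-- The ambient space of candidate solution data. -/
abbrev Amb (V : Zigzag F) : Type := ((j : ℤ) → V.V j) × ((j : ℤ) → Module.Dual F (V.V j))

/-- The linear conditions for a solution datum on the window `[a,b]`. -/
def Scond (K : Submodule F (V.V b)) (a : ℤ) : Submodule F (Amb V) where
  carrier := {p | ThreadOn V b p.1 a ∧ CoThreadOn V b p.2 a ∧ p.1 b ∈ K ∧
    (∀ j, b < j → p.1 j = 0) ∧ (∀ j, b < j → p.2 j = 0) ∧
    (∀ (h : Even (b+1)) (u : V.V (b+1)), p.2 (b+1-1) (V.g (b+1) h u) = 0)}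
  add_mem' := by
    rintro p q ⟨hp1, hp2, hp3, hp4, hp5, hp6⟩ ⟨hq1, hq2, hq3, hq4, hq5, hq6⟩
    refine ⟨hp1.add hq1, hp2.add hq2, K.add_mem hp3 hq3, ?_, ?_, ?_⟩
    · intro j hj
      show p.1 j + q.1 j = 0
      rw [hp4 j hj, hq4 j hj, add_zero]
    · intro j hj
      show p.2 j + q.2 j = 0
      rw [hp5 j hj, hq5 j hj, add_zero]
    · intro h u
      show (p.2 (b+1-1) + q.2 (b+1-1)) (V.g (b+1) h u) = 0
      rw [LinearMap.add_apply, hp6 h u, hq6 h u, add_zero]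
  zero_mem' := by
    refine ⟨ThreadOn.zero, CoThreadOn.zero, K.zero_mem, ?_, ?_, ?_⟩
    · intro j hj; rfl
    · intro j hj; rfl
    · intro h u; rfl
  smul_mem' := by
    rintro c p ⟨hp1, hp2, hp3, hp4, hp5, hp6⟩
    refine ⟨hp1.smul c, hp2.smul c, K.smul_mem c hp3, ?_, ?_, ?_⟩
    · intro j hj
      show c • p.1 j = 0
      rw [hp4 j hj, smul_zero]
    · intro j hj
      show c • p.2 j = 0
      rw [hp5 j hj, smul_zero]
    · intro h u
      show (c • p.2 (b+1-1)) (V.g (b+1) h u) = 0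
      rw [LinearMap.smul_apply, hp6 h u, smul_zero]

variable {K : Submodule F (V.V b)}

theorem mem_Scond {p : Amb V} {a : ℤ} :
    p ∈ Scond V b K a ↔ (ThreadOn V b p.1 a ∧ CoThreadOn V b p.2 a ∧ p.1 b ∈ K ∧
    (∀ j, b < j → p.1 j = 0) ∧ (∀ j, b < j → p.2 j = 0) ∧
    (∀ (h : Even (b+1)) (u : V.V (b+1)), p.2 (b+1-1) (V.g (b+1) h u) = 0)) := Iff.rfl

theorem Smono {a' a : ℤ} (h : a' ≤ a) : Scond V b K a' ≤ Scond V b K a := by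
  rintro p ⟨h1, h2, h3, h4, h5, h6⟩
  exact ⟨h1.mono h, h2.mono h, h3, h4, h5, h6⟩

/-- Projection onto the coordinates in the window `[b-n, b]`. -/
noncomputable def projm (n : ℕ) :
    Amb V →ₗ[F] (((j : ↥(Finset.Icc (b - (n:ℤ)) b)) → V.V j) ×
      ((j : ↥(Finset.Icc (b - (n:ℤ)) b)) → Module.Dual F (V.V j))) :=
  LinearMap.prodMap
    (LinearMap.pi (fun j : ↥(Finset.Icc (b - (n:ℤ)) b) =>
      LinearMap.proj (φ := fun i : ℤ => V.V i) (j : ℤ)))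
    (LinearMap.pi (fun j : ↥(Finset.Icc (b - (n:ℤ)) b) =>
      LinearMap.proj (φ := fun i : ℤ => Module.Dual F (V.V i)) (j : ℤ)))

theorem projm_eq {p q : Amb V} {n : ℕ} (h : projm V b n p = projm V b n q) :
    ∀ j : ℤ, b - n ≤ j → j ≤ b → (p.1 j = q.1 j ∧ p.2 j = q.2 j) := by
  intro j h1 h2
  have hj : j ∈ Finset.Icc (b - (n:ℤ)) b := Finset.mem_Icc.mpr ⟨h1, h2⟩
  simp only [projm, LinearMap.prodMap_apply, Prod.mk.injEq] at h
  constructor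
  · have := congrFun h.1 ⟨j, hj⟩
    simpa [LinearMap.pi_apply] using this
  · have := congrFun h.2 ⟨j, hj⟩
    simpa [LinearMap.pi_apply] using this

set_option synthInstance.maxHeartbeats 1000000 in
/-- Stabilization of the chain of window images, by finite-dimensionality. -/
theorem stab (hfd : ∀ i, FiniteDimensional F (V.V i)) (K : Submodule F (V.V b)) (n : ℕ) :
    ∃ M : ℕ, ∀ m, M ≤ m →
      Submodule.map (projm V b n) (Scond V b K (b - m)) =
      Submodule.map (projm V b n) (Scond V b K (b - M)) := by
  classical
  haveI : ∀ i, FiniteDimensional F (V.V i) := hfd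
  haveI h1 : FiniteDimensional F ((j : ↥(Finset.Icc (b - (n:ℤ)) b)) → V.V j) := by
    infer_instance
  haveI h2 : FiniteDimensional F ((j : ↥(Finset.Icc (b - (n:ℤ)) b)) → Module.Dual F (V.V j)) := by
    infer_instance
  haveI h3 : FiniteDimensional F (((j : ↥(Finset.Icc (b - (n:ℤ)) b)) → V.V j) ×
      ((j : ↥(Finset.Icc (b - (n:ℤ)) b)) → Module.Dual F (V.V j))) := by
    infer_instance
  set d : ℕ → ℕ := fun m => Module.finrank F
    (Submodule.map (projm V b n) (Scond V b K (b - m))) with hd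
  have hmono : ∀ m m' : ℕ, m ≤ m' →
      Submodule.map (projm V b n) (Scond V b K (b - m')) ≤
      Submodule.map (projm V b n) (Scond V b K (b - m)) := by
    intro m m' h
    exact Submodule.map_mono (Smono V b (by omega))
  have hne : (Set.range d).Nonempty := ⟨d 0, ⟨0, rfl⟩⟩
  obtain ⟨M, hM⟩ := Nat.sInf_mem hne
  refine ⟨M, fun m hm => ?_⟩
  refine Submodule.eq_of_le_of_finrank_le (hmono M m hm) ?_
  have h1 : sInf (Set.range d) ≤ d m := Nat.sInf_le ⟨m, rfl⟩
  rw [← hM] at h1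
  exact h1

/-- The limit of compatible window solutions: a global solution datum. -/
theorem limit_sol (hfd : ∀ i, FiniteDimensional F (V.V i))
    (hws : ∀ m : ℕ, ∃ p, p ∈ Scond V b K (b - m) ∧ p.2 b (p.1 b) = 1) :
    ∃ p : Amb V, (∀ a : ℤ, p ∈ Scond V b K a) ∧ p.2 b (p.1 b) = 1 := by
  classical
  choose N hN using stab V b hfd K
  set S : ℤ → Submodule F (Amb V) := Scond V b K with hS
  set DI : ℕ → Amb V → Prop := fun n p => p ∈ S (b - n) ∧
    ∀ m : ℕ, ∃ q, q ∈ S (b - m) ∧ ∀ j : ℤ, b - n ≤ j → j ≤ b →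
      (q.1 j = p.1 j ∧ q.2 j = p.2 j) with hDI
  have deep_of_mem : ∀ (n m : ℕ) (p : Amb V), N n ≤ m → n ≤ m → p ∈ S (b - m) → DI n p := by
    intro n m p hm hm2 hp
    constructor
    · exact Smono V b (by omega) hp
    · intro m'
      by_cases hm' : m' ≤ m
      · exact ⟨p, Smono V b (by omega) hp, fun j _ _ => ⟨rfl, rfl⟩⟩
      · have h1 : projm V b n p ∈ Submodule.map (projm V b n) (S (b - m)) :=
          ⟨p, hp, rfl⟩
        rw [hN n m hm, ← hN n m' (by omega)] at h1
        obtain ⟨q, hq, hqe⟩ := h1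
        exact ⟨q, hq, projm_eq V b hqe⟩
  have lift : ∀ (n : ℕ) (p : Amb V), DI n p → ∃ p', DI (n+1) p' ∧
      ∀ j : ℤ, b - n ≤ j → j ≤ b → (p'.1 j = p.1 j ∧ p'.2 j = p.2 j) := by
    intro n p hp
    obtain ⟨q, hq, hqe⟩ := hp.2 (max (N (n+1)) (n+1))
    exact ⟨q, deep_of_mem (n+1) _ q (le_max_left _ _) (le_max_right _ _) hq, hqe⟩
  obtain ⟨p0, hp0S, hp0pair⟩ := hws (N 0)
  have hp0 : DI 0 p0 := deep_of_mem 0 (N 0) p0 le_rfl (Nat.zero_le _) hp0S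
  choose step hstep1 hstep2 using lift
  set Fseq : ∀ n : ℕ, {p : Amb V // DI n p} := fun n =>
    Nat.rec ⟨p0, hp0⟩ (fun n prev => ⟨step n prev.1 prev.2, hstep1 n prev.1 prev.2⟩) n with hFseq
  set pp : ℕ → Amb V := fun n => (Fseq n).1 with hpp
  have hmem : ∀ n : ℕ, pp n ∈ S (b - n) := fun n => (Fseq n).2.1
  have hcompat : ∀ n : ℕ, ∀ j : ℤ, b - n ≤ j → j ≤ b →
      ((pp (n+1)).1 j = (pp n).1 j ∧ (pp (n+1)).2 j = (pp n).2 j) :=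
    fun n => hstep2 n (Fseq n).1 (Fseq n).2
  have hagree : ∀ (n m : ℕ), n ≤ m → ∀ j : ℤ, b - n ≤ j → j ≤ b →
      ((pp m).1 j = (pp n).1 j ∧ (pp m).2 j = (pp n).2 j) := by
    intro n m
    induction m with
    | zero =>
      intro hnm j h1 h2
      have : n = 0 := by omega
      subst this
      exact ⟨rfl, rfl⟩
    | succ m ih =>
      intro hnm j h1 h2
      by_cases h : n = m + 1
      · subst h; exact ⟨rfl, rfl⟩
      · obtain ⟨e1, e2⟩ := ih (by omega) j h1 h2
        obtain ⟨f1, f2⟩ := hcompat m j (by omega) h2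
        exact ⟨f1.trans e1, f2.trans e2⟩
  set X : ∀ j : ℤ, V.V j :=
    fun j => if h : j ≤ b then (pp (b - j).toNat).1 j else 0 with hX
  set L : ∀ j : ℤ, Module.Dual F (V.V j) :=
    fun j => if h : j ≤ b then (pp (b - j).toNat).2 j else 0 with hL
  have hXv : ∀ (n : ℕ) (j : ℤ), b - n ≤ j → j ≤ b →
      (X j = (pp n).1 j ∧ L j = (pp n).2 j) := by
    intro n j h1 h2
    obtain ⟨e1, e2⟩ := hagree (b - j).toNat n (by omega) j (by omega) h2
    constructor
    · rw [hX]; dsimp only; rw [dif_pos h2]; exact e1.symm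
    · rw [hL]; dsimp only; rw [dif_pos h2]; exact e2.symm
  have hXthread : ∀ a : ℤ, ThreadOn V b X a := by
    intro a j hj
    constructor
    · intro _ h2
      obtain ⟨ex, _⟩ := hXv (b - j).toNat j (by omega) (by omega)
      obtain ⟨ex', _⟩ := hXv (b - j).toNat (j+1) (by omega) (by omega)
      rw [ex, ex']
      exact (((mem_Scond V b).mp (hmem (b - j).toNat)).1 j hj).1 (by omega) h2
    · intro _ h2
      obtain ⟨ex, _⟩ := hXv (b - (j-1)).toNat (j-1) (by omega) (by omega)
      obtain ⟨ex', _⟩ := hXv (b - (j-1)).toNat j (by omega) (by omega)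
      rw [ex, ex']
      exact (((mem_Scond V b).mp (hmem (b - (j-1)).toNat)).1 j hj).2 (by omega) h2
  have hLthread : ∀ a : ℤ, CoThreadOn V b L a := by
    intro a j hj
    constructor
    · intro _ h2 u
      obtain ⟨_, el⟩ := hXv (b - j).toNat j (by omega) (by omega)
      obtain ⟨_, el'⟩ := hXv (b - j).toNat (j+1) (by omega) (by omega)
      rw [el, el']
      exact (((mem_Scond V b).mp (hmem (b - j).toNat)).2.1 j hj).1 (by omega) h2 u
    · intro _ h2 u
      obtain ⟨_, el⟩ := hXv (b - (j-1)).toNat (j-1) (by omega) (by omega)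
      obtain ⟨_, el'⟩ := hXv (b - (j-1)).toNat j (by omega) (by omega)
      rw [el, el']
      exact (((mem_Scond V b).mp (hmem (b - (j-1)).toNat)).2.1 j hj).2 (by omega) h2 u
  have hb0 : X b = (pp 0).1 b ∧ L b = (pp 0).2 b := hXv 0 b (by omega) le_rfl
  refine ⟨(X, L), ?_, ?_⟩
  · intro a
    refine ⟨hXthread a, hLthread a, ?_, ?_, ?_, ?_⟩
    · show X b ∈ K
      rw [hb0.1]
      exact ((mem_Scond V b).mp (hmem 0)).2.2.1
    · intro j hj
      show X j = 0
      rw [hX]; dsimp only; rw [dif_neg (by omega)]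
    · intro j hj
      show L j = 0
      rw [hL]; dsimp only; rw [dif_neg (by omega)]
    · intro h u
      show L (b+1-1) (V.g (b+1) h u) = 0
      obtain ⟨_, el⟩ := hXv 0 (b+1-1) (by omega) (by omega)
      rw [el]
      exact ((mem_Scond V b).mp (hmem 0)).2.2.2.2.2 h u
  · show L b (X b) = 1
    rw [hb0.1, hb0.2]
    exact hp0pair

end ML

end Zigzag

namespace Zigzag

variable {F : Type} [Field F]

section Window

variable {V : Zigzag F} {b : ℤ}

theorem ThreadOn.cut {x : ∀ j, V.V j} {a : ℤ} (hx : ThreadOn V b x a) :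
    ThreadOn V b (fun j => if a ≤ j ∧ j ≤ b then x j else 0) a := by
  intro j hj
  constructor
  · intro h1 h2
    dsimp only
    rw [if_pos ⟨h1, by omega⟩, if_pos (show a ≤ j + 1 ∧ j + 1 ≤ b by omega)]
    exact (hx j hj).1 h1 h2
  · intro h1 h2
    dsimp only
    rw [if_pos (show a ≤ j - 1 ∧ j - 1 ≤ b by omega), if_pos (show a ≤ j ∧ j ≤ b by omega)]
    exact (hx j hj).2 h1 h2

theorem CoThreadOn.cut {lam : ∀ j, Module.Dual F (V.V j)} {a : ℤ} (hl : CoThreadOn V b lam a) :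
    CoThreadOn V b (fun j => if a ≤ j ∧ j ≤ b then lam j else 0) a := by
  intro j hj
  constructor
  · intro h1 h2 u
    dsimp only
    rw [if_pos (show a ≤ j + 1 ∧ j + 1 ≤ b by omega), if_pos (show a ≤ j ∧ j ≤ b by omega)]
    exact (hl j hj).1 h1 h2 u
  · intro h1 h2 u
    dsimp only
    rw [if_pos (show a ≤ j - 1 ∧ j - 1 ≤ b by omega), if_pos (show a ≤ j ∧ j ≤ b by omega)]
    exact (hl j hj).2 h1 h2 u

/-- Vanishing above `b` from a windowed solution on `[a,b]`. -/
theorem vanish_of_window_sol (V : Zigzag F) (hV : V.Indecomposable) (b a : ℤ) (hab : a ≤ b)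
    (x : ∀ j, V.V j) (lam : ∀ j, Module.Dual F (V.V j))
    (hx : ThreadOn V b x a) (hl : CoThreadOn V b lam a)
    (hone : ∀ j, a ≤ j → j ≤ b → lam j (x j) = 1)
    (htopF : ∀ h : Even b, V.f b h (x b) = 0)
    (htopG : ∀ (h : Even (b+1)) (u : V.V (b+1)), lam (b+1-1) (V.g (b+1) h u) = 0)
    (hbotg : ∀ h : Even a, V.g a h (x a) = 0)
    (hbotf : ∀ (h : Even (a-1)) (u : V.V (a-1)), lam (a-1+1) (V.f (a-1) h u) = 0) :
    ∀ j, b < j → ∀ v : V.V j, v = 0 := by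
  classical
  set x' : ∀ j, V.V j := fun j => if a ≤ j ∧ j ≤ b then x j else 0 with hx'
  set lam' : ∀ j, Module.Dual F (V.V j) := fun j => if a ≤ j ∧ j ≤ b then lam j else 0 with hlam'
  have hx'v : ∀ j, a ≤ j → j ≤ b → x' j = x j := by
    intro j h1 h2; rw [hx']; dsimp only; rw [if_pos ⟨h1, h2⟩]
  have hlam'v : ∀ j, a ≤ j → j ≤ b → lam' j = lam j := by
    intro j h1 h2; rw [hlam']; dsimp only; rw [if_pos ⟨h1, h2⟩]
  refine vanish_of_sol V hV b x' lam' (some a) ?_ ?_ ?_ ?_ ?_ ?_ ?_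
  · intro a' ha'; simp at ha'; omega
  · intro j hj
    constructor
    · rw [hx']; dsimp only
      rw [if_neg (by intro hcon; apply hj; refine ⟨hcon.2, ?_⟩; intro a' ha'; simp at ha'; omega)]
    · rw [hlam']; dsimp only
      rw [if_neg (by intro hcon; apply hj; refine ⟨hcon.2, ?_⟩; intro a' ha'; simp at ha'; omega)]
  · intro a' ha'
    have haa : a ≤ a' := by have := ha' a rfl; omega
    exact ⟨(hx.cut).mono haa, (hl.cut).mono haa⟩
  · intro j h1 h2
    have haj : a ≤ j := by have := h2 a rfl; omega
    rw [hx'v j haj h1, hlam'v j haj h1]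
    exact hone j haj h1
  · intro h
    rw [hx'v b hab le_rfl]
    exact htopF h
  · intro h u
    rw [hlam'v (b+1-1) (by omega) (by omega)]
    exact htopG h u
  · intro a' ha'
    simp only [Option.mem_def, Option.some.injEq] at ha'
    subst ha'
    constructor
    · intro h
      rw [hx'v a le_rfl hab]
      exact hbotg h
    · intro h u
      rw [hlam'v (a-1+1) (by omega) (by omega)]
      exact hbotf h u

/-- The master splitting theorem: boundary data at `b` forces everything above `b`
to vanish, for an indecomposable module. -/
theorem kill (V : Zigzag F) (hfd : ∀ i, FiniteDimensional F (V.V i)) (hV : V.Indecomposable)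
    (b : ℤ) (K W : Submodule F (V.V b)) (hWK : W ≤ K)
    (k : V.V b) (hkK : k ∈ K) (hkW : k ∉ W)
    (hKf : ∀ (hb : Even b), ∀ v ∈ K, V.f b hb v = 0)
    (hWg : ∀ (hb : Even (b+1)) (u : V.V (b+1)), V.g (b+1) hb u ∈ Zsub V b W (b+1-1)) :
    ∀ j, b < j → ∀ v : V.V j, v = 0 := by
  classical
  by_cases hED : ∃ (a : ℤ) (ha : Even a), a ≤ b ∧ ∃ x, ThreadOn V b x a ∧ x b ∈ K ∧
      V.g a ha (x a) = 0 ∧ x a ∉ Zsub V b W a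
  · obtain ⟨a, ha, hab, x, hx, hxb, hgd, hnm⟩ := hED
    obtain ⟨μ₀, hμk, hμ1⟩ := ZZaux.exists_dual_sep (Zsub V b W a) (x a) hnm
    obtain ⟨lam, hla, hlc, hlk⟩ := upext (W := W) (b - a).toNat a (by omega)
      (Function.update (fun j => (0 : Module.Dual F (V.V j))) a μ₀)
      (by rw [Function.update_self]; exact hμk)
    rw [Function.update_self] at hla
    have hone0 : ∀ j, a ≤ j → j ≤ b → lam j (x j) = 1 := by
      intro j h1 h2
      rw [const_along hx hlc j h1 h2, ← const_along hx hlc a le_rfl hab, hla, hμ1]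
    refine vanish_of_window_sol V hV b a hab x lam hx hlc hone0 ?_ ?_ ?_ ?_
    · intro h; exact hKf h (x b) hxb
    · intro h u
      exact hlk (b+1-1) (by omega) (by omega) _ (hWg h u)
    · intro h; exact hgd
    · intro h u
      exfalso
      rcases ha with ⟨p, hp⟩; rcases h with ⟨q, hq⟩; omega
  · by_cases hOD : ∃ (c : ℤ) (hc : Even c), c < b ∧ ∃ x, ThreadOn V b x (c+1) ∧ x b ∈ K ∧
        ¬ ∃ z ∈ Zsub V b W (c+1), ∃ u, x (c+1) = z + V.f c hc u
    · obtain ⟨c, hc, hcb, x, hx, hxb, hnd⟩ := hOD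
      have hnm : x (c+1) ∉ (Zsub V b W (c+1) ⊔ LinearMap.range (V.f c hc)) := by
        intro hm
        rcases Submodule.mem_sup.mp hm with ⟨z, hz, w, hw, heq⟩
        rcases hw with ⟨u, hu⟩
        exact hnd ⟨z, hz, u, by rw [← heq, hu]⟩
      obtain ⟨μ₀, hμk, hμ1⟩ := ZZaux.exists_dual_sep _ _ hnm
      obtain ⟨lam, hla, hlc, hlk⟩ := upext (W := W) (b - (c+1)).toNat (c+1) (by omega)
        (Function.update (fun j => (0 : Module.Dual F (V.V j))) (c+1) μ₀)
        (by rw [Function.update_self]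
            intro z hz
            exact hμk z (Submodule.mem_sup_left hz))
      rw [Function.update_self] at hla
      have hone0 : ∀ j, c+1 ≤ j → j ≤ b → lam j (x j) = 1 := by
        intro j h1 h2
        rw [const_along hx hlc j h1 h2, ← const_along hx hlc (c+1) le_rfl (by omega), hla, hμ1]
      refine vanish_of_window_sol V hV b (c+1) (by omega) x lam hx hlc hone0 ?_ ?_ ?_ ?_
      · intro h; exact hKf h (x b) hxb
      · intro h u
        exact hlk (b+1-1) (by omega) (by omega) _ (hWg h u)
      · intro h
        exfalso
        rcases hc with ⟨p, hp⟩; rcases h with ⟨q, hq⟩; omega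
      · rw [show c + 1 - 1 = c from by omega]
        intro h u
        rw [hla]
        exact hμk _ (Submodule.mem_sup_right ⟨u, rfl⟩)
    · -- no usable death anywhere: build the infinite solution by a limit argument
      have hE : ∀ (a : ℤ) (ha : Even a), a ≤ b → ∀ x, ThreadOn V b x a → x b ∈ K →
          V.g a ha (x a) = 0 → x a ∈ Zsub V b W a := by
        intro a ha hab x hx hxb hg
        by_contra hn
        exact hED ⟨a, ha, hab, x, hx, hxb, hg, hn⟩
      have hO : ∀ (c : ℤ) (hc : Even c), c < b → ∀ x, ThreadOn V b x (c+1) → x b ∈ K →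
          ∃ z ∈ Zsub V b W (c+1), ∃ u, x (c+1) = z + V.f c hc u := by
        intro c hc hcb x hx hxb
        by_contra hn
        exact hOD ⟨c, hc, hcb, x, hx, hxb, hn⟩
      have hws : ∀ m : ℕ, ∃ p, p ∈ Scond V b K (b - m) ∧ p.2 b (p.1 b) = 1 := by
        intro m
        obtain ⟨x, hx, hxb, hxa⟩ := crux hWK hkK hkW hE hO m (b - m) rfl
        obtain ⟨μ₀, hμk, hμ1⟩ := ZZaux.exists_dual_sep _ _ hxa
        obtain ⟨lam, hla, hlc, hlk⟩ := upext (W := W) m (b - m) rfl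
          (Function.update (fun j => (0 : Module.Dual F (V.V j))) (b - m) μ₀)
          (by rw [Function.update_self]; exact hμk)
        rw [Function.update_self] at hla
        have hone0 : ∀ j, b - (m:ℤ) ≤ j → j ≤ b → lam j (x j) = 1 := by
          intro j h1 h2
          rw [const_along hx hlc j h1 h2, ← const_along hx hlc (b - m) le_rfl (by omega),
            hla, hμ1]
        refine ⟨(fun j => if b - (m:ℤ) ≤ j ∧ j ≤ b then x j else 0,
                 fun j => if b - (m:ℤ) ≤ j ∧ j ≤ b then lam j else 0), ⟨?_, ?_, ?_, ?_, ?_, ?_⟩, ?_⟩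
        · exact hx.cut
        · exact hlc.cut
        · show (if b - (m:ℤ) ≤ b ∧ b ≤ b then x b else 0) ∈ K
          rw [if_pos ⟨by omega, le_rfl⟩]
          exact hxb
        · intro j hj
          show (if b - (m:ℤ) ≤ j ∧ j ≤ b then x j else 0) = 0
          rw [if_neg (by omega)]
        · intro j hj
          show (if b - (m:ℤ) ≤ j ∧ j ≤ b then lam j else 0) = 0
          rw [if_neg (by omega)]
        · intro h u
          show (if b - (m:ℤ) ≤ b+1-1 ∧ b+1-1 ≤ b then lam (b+1-1) else 0) (V.g (b+1) h u) = 0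
          rw [if_pos ⟨by omega, by omega⟩]
          exact hlk (b+1-1) (by omega) (by omega) _ (hWg h u)
        · show (if b - (m:ℤ) ≤ b ∧ b ≤ b then lam b else 0)
            ((if b - (m:ℤ) ≤ b ∧ b ≤ b then x b else 0)) = 1
          rw [if_pos ⟨by omega, le_rfl⟩, if_pos ⟨by omega, le_rfl⟩]
          exact hone0 b (by omega) le_rfl
      obtain ⟨p, hpS, hppair⟩ := limit_sol V b hfd hws
      refine vanish_of_sol V hV b p.1 p.2 none ?_ ?_ ?_ ?_ ?_ ?_ ?_
      · simp
      · intro j hj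
        have hbj : b < j := by
          by_contra h
          exact hj ⟨by omega, by simp⟩
        have h6 := (mem_Scond V b).mp (hpS 0)
        exact ⟨h6.2.2.2.1 j hbj, h6.2.2.2.2.1 j hbj⟩
      · intro a' _
        have h6 := (mem_Scond V b).mp (hpS a')
        exact ⟨h6.1, h6.2.1⟩
      · intro j hjb _
        have h6 := (mem_Scond V b).mp (hpS j)
        rw [const_along h6.1 h6.2.1 j le_rfl hjb]
        exact hppair
      · intro h
        exact hKf h (p.1 b) ((mem_Scond V b).mp (hpS 0)).2.2.1
      · intro h u
        exact ((mem_Scond V b).mp (hpS 0)).2.2.2.2.2 h u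
      · intro a ha
        simp at ha

end Window

end Zigzag

namespace Zigzag

variable {F : Type} [Field F]

section Mirror

variable (V : Zigzag F)

/-- Transport along an index equality, as a linear map. -/
def lcast {s t : ℤ} (h : s = t) : V.V s →ₗ[F] V.V t := h ▸ LinearMap.id

/-- Transport along an index equality, as a linear equivalence. -/
def vcast {s t : ℤ} (h : s = t) : V.V s ≃ₗ[F] V.V t := h ▸ LinearEquiv.refl F (V.V s)

theorem vcast_apply {s t : ℤ} (h : s = t) (x : V.V s) : vcast V h x = lcast V h x := by
  subst h; rfl

theorem lcast_lcast {s t r : ℤ} (h1 : s = t) (h2 : t = r) (x : V.V s) :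
    lcast V h2 (lcast V h1 x) = lcast V (h1.trans h2) x := by
  subst h1; subst h2; rfl

theorem lcast_inj {s t : ℤ} (h : s = t) : Function.Injective (lcast V h) := by
  subst h; exact fun a b hab => hab

theorem lcast_surj {s t : ℤ} (h : s = t) : Function.Surjective (lcast V h) := by
  subst h; exact fun a => ⟨a, rfl⟩

theorem lcast_eq_zero {s t : ℤ} (h : s = t) (x : V.V s) : lcast V h x = 0 ↔ x = 0 := by
  subst h; exact Iff.rfl

theorem lcast_f {s t : ℤ} (h : s = t) (h' : s + 1 = t + 1) (hs : Even s) (ht : Even t)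
    (x : V.V s) : V.f t ht (lcast V h x) = lcast V h' (V.f s hs x) := by
  subst h; rfl

theorem lcast_g {s t : ℤ} (h : s = t) (h' : s - 1 = t - 1) (hs : Even s) (ht : Even t)
    (x : V.V s) : V.g t ht (lcast V h x) = lcast V h' (V.g s hs x) := by
  subst h; rfl

/-- The mirror (left-right flip) of a zigzag module. -/
def mirror : Zigzag F where
  V j := V.V (-j)
  acg j := inferInstance
  mod j := inferInstance
  f i hi := (lcast V (show -i - 1 = -(i+1) by omega)).comp (V.g (-i) (even_neg.mpr hi))
  g i hi := (lcast V (show -i + 1 = -(i-1) by omega)).comp (V.f (-i) (even_neg.mpr hi))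

theorem lcast_mirror {s t : ℤ} (h : s = t) (h' : -s = -t) (x : (mirror V).V s) :
    lcast (mirror V) h x = lcast V h' x := by
  subst h; rfl

/-- Naturality of an isomorphism family in the index. -/
theorem Iso.cast_nat {A B : Zigzag F} (φ : Iso A B) {s t : ℤ} (h : s = t) (z : A.V s) :
    φ.e t (lcast A h z) = lcast B h (φ.e s z) := by
  subst h; rfl

theorem lcast_dsum (U W : Zigzag F) {s t : ℤ} (h : s = t) (p : (U.dsum W).V s) :
    lcast (U.dsum W) h p = (lcast U h p.1, lcast W h p.2) := by
  subst h; rfl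

theorem isZero_mirror_iff : IsZero (mirror V) ↔ IsZero V := by
  constructor
  · intro h i x
    have h2 := h (-i) (lcast V (show i = -(-i) by omega) x)
    exact (lcast_eq_zero V _ x).mp h2
  · intro h i x
    exact h (-i) x

/-- The mirror of an indecomposable module is indecomposable. -/
theorem mirror_indec (hV : V.Indecomposable) : (mirror V).Indecomposable := by
  constructor
  · intro h
    exact hV.1 ((isZero_mirror_iff V).mp h)
  · intro U W' φ
    have ψ : Iso V ((mirror U).dsum (mirror W')) :=
      { e := fun i => (vcast V (show i = -(-i) by omega)).trans (φ.e (-i))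
        comm_f := by
          intro i hi x
          show φ.e (-(i+1)) (vcast V (show i + 1 = -(-(i+1)) by omega) (V.f i hi x)) =
            ((mirror U).dsum (mirror W')).f i hi (φ.e (-i) (vcast V (show i = -(-i) by omega) x))
          have hnegi : Even (-i) := even_neg.mpr hi
          have key := φ.comm_g (-i) hnegi (vcast V (show i = -(-i) by omega) x)
          have hrhs : (((mirror U).dsum (mirror W')).f i hi)
              (φ.e (-i) (vcast V (show i = -(-i) by omega) x)) =
              lcast (U.dsum W') (show -i - 1 = -(i+1) by omega)
                ((U.dsum W').g (-i) hnegi (φ.e (-i) (vcast V (show i = -(-i) by omega) x))) := by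
            rw [lcast_dsum]
            rfl
          refine Eq.trans ?_ hrhs.symm
          have key' := congrArg (lcast (U.dsum W') (show -i - 1 = -(i+1) by omega)) key
          refine Eq.trans ?_ key'
          have cn := Iso.cast_nat φ (show -i - 1 = -(i+1) by omega)
            ((mirror V).g (-i) hnegi (vcast V (show i = -(-i) by omega) x))
          refine Eq.trans ?_ cn
          refine congrArg (φ.e (-(i+1))) ?_
          have e1 := lcast_mirror V (show -i - 1 = -(i+1) by omega)
            (show -(-i - 1) = -(-(i+1)) by omega)
            ((mirror V).g (-i) hnegi (vcast V (show i = -(-i) by omega) x))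
          refine Eq.trans ?_ e1.symm
          show vcast V (show i + 1 = -(-(i+1)) by omega) (V.f i hi x) =
            lcast V (show -(-i - 1) = -(-(i+1)) by omega)
              (lcast V (show -(-i) + 1 = -(-i - 1) by omega)
                (V.f (-(-i)) (even_neg.mpr hnegi) (vcast V (show i = -(-i) by omega) x)))
          rw [vcast_apply, vcast_apply, lcast_f V (show i = -(-i) by omega)
            (show i + 1 = -(-i) + 1 by omega) hi (even_neg.mpr hnegi)]
          rw [lcast_lcast, lcast_lcast]
        comm_g := by
          intro i hi x
          show φ.e (-(i-1)) (vcast V (show i - 1 = -(-(i-1)) by omega) (V.g i hi x)) =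
            ((mirror U).dsum (mirror W')).g i hi (φ.e (-i) (vcast V (show i = -(-i) by omega) x))
          have hnegi : Even (-i) := even_neg.mpr hi
          have key := φ.comm_f (-i) hnegi (vcast V (show i = -(-i) by omega) x)
          have hrhs : (((mirror U).dsum (mirror W')).g i hi)
              (φ.e (-i) (vcast V (show i = -(-i) by omega) x)) =
              lcast (U.dsum W') (show -i + 1 = -(i-1) by omega)
                ((U.dsum W').f (-i) hnegi (φ.e (-i) (vcast V (show i = -(-i) by omega) x))) := by
            rw [lcast_dsum]
            rfl
          refine Eq.trans ?_ hrhs.symm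
          have key' := congrArg (lcast (U.dsum W') (show -i + 1 = -(i-1) by omega)) key
          refine Eq.trans ?_ key'
          have cn := Iso.cast_nat φ (show -i + 1 = -(i-1) by omega)
            ((mirror V).f (-i) hnegi (vcast V (show i = -(-i) by omega) x))
          refine Eq.trans ?_ cn
          refine congrArg (φ.e (-(i-1))) ?_
          have e1 := lcast_mirror V (show -i + 1 = -(i-1) by omega)
            (show -(-i + 1) = -(-(i-1)) by omega)
            ((mirror V).f (-i) hnegi (vcast V (show i = -(-i) by omega) x))
          refine Eq.trans ?_ e1.symm
          show vcast V (show i - 1 = -(-(i-1)) by omega) (V.g i hi x) =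
            lcast V (show -(-i + 1) = -(-(i-1)) by omega)
              (lcast V (show -(-i) - 1 = -(-i + 1) by omega)
                (V.g (-(-i)) (even_neg.mpr hnegi) (vcast V (show i = -(-i) by omega) x)))
          rw [vcast_apply, vcast_apply, lcast_g V (show i = -(-i) by omega)
            (show i - 1 = -(-i) - 1 by omega) hi (even_neg.mpr hnegi)]
          rw [lcast_lcast, lcast_lcast] }
    rcases hV.2 (mirror U) (mirror W') ψ with h | h
    · left
      exact (isZero_mirror_iff U).mp h
    · right
      exact (isZero_mirror_iff W').mp h

end Mirror

end Zigzag

namespace Zigzag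

variable {F : Type} [Field F]

section Assemble

variable (V : Zigzag F)

/-- A bad even index on the right kills everything strictly beyond it. -/
theorem rightVanish (hfd : ∀ i, FiniteDimensional F (V.V i)) (hV : V.Indecomposable)
    (i₀ : ℤ) (h₀ : Even i₀)
    (hb : ¬Function.Injective (V.f i₀ h₀) ∨ ¬Function.Surjective (V.g i₀ h₀)) :
    ∀ j, i₀ + 1 ≤ j → ∀ v : V.V j, v = 0 := by
  rcases hb with hinj | hsurj
  · have hker : LinearMap.ker (V.f i₀ h₀) ≠ ⊥ := by
      intro h; exact hinj (LinearMap.ker_eq_bot.mp h)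
    obtain ⟨k, hk, hk0⟩ := (Submodule.ne_bot_iff _).mp hker
    have hkill := kill V hfd hV i₀ (LinearMap.ker (V.f i₀ h₀)) ⊥ bot_le k hk
      (by simpa using hk0) ?_ ?_
    · intro j hj v
      exact hkill j (by omega) v
    · intro hb' v hv
      exact hv
    · intro hb' u
      exfalso
      rcases h₀ with ⟨p, hp⟩; rcases hb' with ⟨q, hq⟩; omega
  · have hrange : LinearMap.range (V.g i₀ h₀) ≠ ⊤ := by
      intro h; exact hsurj (LinearMap.range_eq_top.mp h)
    obtain ⟨k, hk⟩ : ∃ k, k ∉ LinearMap.range (V.g i₀ h₀) := by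
      by_contra h
      push_neg at h
      exact hrange (eq_top_iff.mpr fun v _ => h v)
    have hkill := kill V hfd hV (i₀ - 1) ⊤ (LinearMap.range (V.g i₀ h₀)) le_top k
      Submodule.mem_top hk ?_ ?_
    · intro j hj v
      exact hkill j (by omega) v
    · intro hb' v _
      exfalso
      rcases h₀ with ⟨p, hp⟩; rcases hb' with ⟨q, hq⟩; omega
    · rw [show i₀ - 1 + 1 = i₀ from by omega]
      intro hb' u
      exact Zsub_top.mpr ⟨u, rfl⟩

/-- Right-hand side of the main theorem. -/
theorem rightGood (hfd : ∀ i, FiniteDimensional F (V.V i)) (hV : V.Indecomposable) :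
    ∃ t : ℤ, 0 ≤ t ∧ ∀ i, t ≤ i → ∀ hi : Even i,
      Function.Injective (V.f i hi) ∧ Function.Surjective (V.g i hi) := by
  by_cases hbad : ∃ i₀ : ℤ, ∃ h₀ : Even i₀,
      ¬Function.Injective (V.f i₀ h₀) ∨ ¬Function.Surjective (V.g i₀ h₀)
  · obtain ⟨i₀, h₀, hb⟩ := hbad
    have hvan := rightVanish V hfd hV i₀ h₀ hb
    refine ⟨max 2 (i₀ + 2), le_trans (by norm_num) (le_max_left _ _), ?_⟩
    intro i hti hi
    have hi2 : i₀ + 2 ≤ i := le_trans (le_max_right _ _) hti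
    constructor
    · intro u v _
      rw [hvan i (by omega) u, hvan i (by omega) v]
    · intro w
      refine ⟨0, ?_⟩
      rw [map_zero]
      exact (hvan (i-1) (by omega) w).symm
  · push_neg at hbad
    exact ⟨0, le_rfl, fun i _ hi => hbad i hi⟩

theorem surj_f_transport {s t : ℤ} (h : s = t) (hs : Even s) (ht : Even t)
    (hsurj : Function.Surjective (V.f s hs)) : Function.Surjective (V.f t ht) := by
  subst h; exact hsurj

theorem inj_g_transport {s t : ℤ} (h : s = t) (hs : Even s) (ht : Even t)
    (hinj : Function.Injective (V.g s hs)) : Function.Injective (V.g t ht) := by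
  subst h; exact hinj

theorem mirror_g_surj {m : ℤ} (hm : Even m)
    (h : Function.Surjective ((mirror V).g m hm)) :
    Function.Surjective (V.f (-m) (even_neg.mpr hm)) := by
  intro y
  obtain ⟨u, hu⟩ := h (lcast V (show -m + 1 = -(m-1) by omega) y)
  exact ⟨u, lcast_inj V _ hu⟩

theorem mirror_f_inj {m : ℤ} (hm : Even m)
    (h : Function.Injective ((mirror V).f m hm)) :
    Function.Injective (V.g (-m) (even_neg.mpr hm)) := by
  intro a b hab
  exact h (congrArg (lcast V (show -m - 1 = -(m+1) by omega)) hab)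

/-- Left-hand side of the main theorem, via the mirror. -/
theorem leftGood (hfd : ∀ i, FiniteDimensional F (V.V i)) (hV : V.Indecomposable) :
    ∃ s : ℤ, s ≤ 0 ∧ ∀ i, i ≤ s → ∀ hi : Even i,
      Function.Surjective (V.f i hi) ∧ Function.Injective (V.g i hi) := by
  obtain ⟨t, ht0, ht⟩ := rightGood (mirror V) (fun i => hfd (-i)) (mirror_indec V hV)
  refine ⟨-t, by omega, ?_⟩
  intro i hi hev
  have hnegi : Even (-i) := even_neg.mpr hev
  obtain ⟨hminj, hmsurj⟩ := ht (-i) (by omega) hnegi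
  constructor
  · exact surj_f_transport V (show -(-i) = i from by omega) _ hev
      (mirror_g_surj V hnegi hmsurj)
  · exact inj_g_transport V (show -(-i) = i from by omega) _ hev
      (mirror_f_inj V hnegi hminj)

end Assemble

end Zigzag


open Zigzag in
/-- for an indecomposable `V`, eventually to the right all `f i` are injective
and all `g i` surjective; dually to the left. -/
theorem stmt3 (F : Type) [Field F] (V : Zigzag F)
    (hfd : ∀ i, FiniteDimensional F (V.V i)) (hV : V.Indecomposable) :
    (∃ t : ℤ, 0 ≤ t ∧ ∀ i, t ≤ i → ∀ hi : Even i,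
      Function.Injective (V.f i hi) ∧ Function.Surjective (V.g i hi)) ∧
    (∃ s : ℤ, s ≤ 0 ∧ ∀ i, i ≤ s → ∀ hi : Even i,
      Function.Surjective (V.f i hi) ∧ Function.Injective (V.g i hi)) := by
  exact ⟨rightGood V hfd hV, leftGood V hfd hV⟩
end

section
/- Let V be a zigzag persistence module with the nested decompositions and modules V^s (for infinite compatible sequences s ∈ I) as in the inductive construction. Then each non-zero V^s is indecomposable, and V ≅ ⨁_{s ∈ I'} V^s where I' is the set of sequences s with V^s ≠ 0. -/
open scoped DirectSum

namespace Zigzag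

variable {F : Type} [Field F]

/-- A submodule of a zigzag persistence module: a family of subspaces preserved by the
structure maps. -/
structure Sub (M : Zigzag F) where
  p : ∀ i, Submodule F (M.V i)
  map_f : ∀ (i : ℤ) (hi : Even i), ∀ x ∈ p i, M.f i hi x ∈ p (i + 1)
  map_g : ∀ (i : ℤ) (hi : Even i), ∀ x ∈ p i, M.g i hi x ∈ p (i - 1)

/-- The zero submodule predicate. -/
def Sub.IsBot {M : Zigzag F} (A : Sub M) : Prop := ∀ i, A.p i = ⊥

/-- The whole module, as a submodule of itself. -/
def Sub.top (M : Zigzag F) : Sub M where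
  p i := ⊤
  map_f i hi x _ := trivial
  map_g i hi x _ := trivial

/-- `Q` is `[s,t]`-indecomposable: non-zero, and in any internal decomposition
`Q = A ⊕ B` one of `A`, `B` vanishes on all indices in `[s,t]`. -/
def Sub.IndecOn {M : Zigzag F} (Q : Sub M) (s t : ℤ) : Prop :=
  ¬ Q.IsBot ∧ ∀ A B : Sub M, (∀ i, A.p i ⊔ B.p i = Q.p i) → (∀ i, A.p i ⊓ B.p i = ⊥) →
    (∀ i, s ≤ i → i ≤ t → A.p i = ⊥) ∨ (∀ i, s ≤ i → i ≤ t → B.p i = ⊥)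

/-- `Q` is indecomposable: non-zero, and in any internal decomposition `Q = A ⊕ B`
one of `A`, `B` is zero. -/
def Sub.Indec {M : Zigzag F} (Q : Sub M) : Prop :=
  ¬ Q.IsBot ∧ ∀ A B : Sub M, (∀ i, A.p i ⊔ B.p i = Q.p i) → (∀ i, A.p i ⊓ B.p i = ⊥) →
    A.IsBot ∨ B.IsBot

/-- `Q` decomposes internally as the direct sum of the family `C`: at every index the
subspaces are independent and their supremum is `Q`. -/
def Sub.DecomposesInto {M : Zigzag F} (Q : Sub M) {J : Type} (C : J → Sub M) : Prop :=
  (∀ i, iSupIndep fun j => (C j).p i) ∧ (∀ i, (⨆ j, (C j).p i) = Q.p i)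

/-- The intersection `V^s = ⋂_l V^{(j_0,…,j_l)}` along a branch `s` of nested choices. -/
def chainInf {M : Zigzag F} (D : ℕ → (ℕ → ℕ) → Sub M) (s : ℕ → ℕ) : Sub M where
  p i := ⨅ l, (D l s).p i
  map_f i hi x hx := (Submodule.mem_iInf _).2 fun l =>
    (D l s).map_f i hi x ((Submodule.mem_iInf _).1 hx l)
  map_g i hi x hx := (Submodule.mem_iInf _).2 fun l =>
    (D l s).map_g i hi x ((Submodule.mem_iInf _).1 hx l)

end Zigzag

namespace Stmt15Aux

open Zigzag

lemma disjoint_sup_aux {R M : Type*} [Ring R] [AddCommGroup M] [Module R M]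
    {a c X Y : Submodule R M} (hac : a ≤ c) (hYc : Y ≤ c)
    (haY : Disjoint a Y) (hcX : Disjoint c X) : Disjoint a (X ⊔ Y) := by
  rw [Submodule.disjoint_def] at haY hcX ⊢
  intro x hxa hxXY
  obtain ⟨u, hu, v, hv, rfl⟩ := Submodule.mem_sup.1 hxXY
  have huc : u ∈ c := by
    have h1 : u + v ∈ c := hac hxa
    have h2 : v ∈ c := hYc hv
    simpa using sub_mem h1 h2
  have hu0 : u = 0 := hcX u huc hu
  subst hu0
  simp only [zero_add] at hxa ⊢
  exact haY v hxa hv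

lemma iSup_split_ne {α M : Type*} [CompleteLattice M] (f : α → M) (c : α) :
    (⨆ j, f j) = f c ⊔ ⨆ (j : {j // j ≠ c}), f j.1 := by
  apply le_antisymm
  · refine iSup_le fun j => ?_
    by_cases h : j = c
    · subst h; exact le_sup_left
    · exact le_sup_of_le_right (le_iSup (fun j : {j // j ≠ c} => f j.1) ⟨j, h⟩)
  · exact sup_le (le_iSup f c) (iSup_le fun j => le_iSup f j.1)

variable {F : Type} [Field F] {V : Zigzag F}

/-- Pointwise supremum of a family of zigzag submodules. -/
def subSup {J : Type} (C : J → Sub V) : Sub V where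
  p i := ⨆ j, (C j).p i
  map_f i hi x hx := by
    refine Submodule.iSup_induction (motive := fun y => V.f i hi y ∈ ⨆ j, (C j).p (i + 1))
      _ hx ?_ ?_ ?_
    · intro j y hy
      exact le_iSup (fun j => (C j).p (i + 1)) j ((C j).map_f i hi y hy)
    · simp
    · intro y z hy hz
      rw [map_add]; exact add_mem hy hz
  map_g i hi x hx := by
    refine Submodule.iSup_induction (motive := fun y => V.g i hi y ∈ ⨆ j, (C j).p (i - 1))
      _ hx ?_ ?_ ?_
    · intro j y hy
      exact le_iSup (fun j => (C j).p (i - 1)) j ((C j).map_g i hi y hy)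
    · simp
    · intro y z hy hz
      rw [map_add]; exact add_mem hy hz

/-- Pointwise binary supremum of zigzag submodules. -/
def sup2 (A B : Sub V) : Sub V where
  p i := A.p i ⊔ B.p i
  map_f i hi x hx := by
    obtain ⟨u, hu, v, hv, rfl⟩ := Submodule.mem_sup.1 hx
    rw [map_add]
    exact Submodule.add_mem_sup (A.map_f i hi u hu) (B.map_f i hi v hv)
  map_g i hi x hx := by
    obtain ⟨u, hu, v, hv, rfl⟩ := Submodule.mem_sup.1 hx
    rw [map_add]
    exact Submodule.add_mem_sup (A.map_g i hi u hu) (B.map_g i hi v hv)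

end Stmt15Aux

open Zigzag in
/-- each non-zero `V^s` arising from the nested construction is
indecomposable, and `V` is the (internal) direct sum of the non-zero `V^s`. -/
theorem stmt15 (F : Type) [Field F] (V : Zigzag F)
    (hfd : ∀ i, FiniteDimensional F (V.V i))
    (D : ℕ → (ℕ → ℕ) → Sub V)
    (hdep : ∀ (k : ℕ) (s s' : ℕ → ℕ), (∀ n, n ≤ k → s n = s' n) → D k s = D k s')
    (hroot : (Sub.top V).DecomposesInto fun j : ℕ => D 0 fun _ => j)
    (hroot_ind : ∀ j : ℕ, (D 0 fun _ => j).IsBot ∨ (D 0 fun _ => j).IndecOn 0 0)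
    (hrefine : ∀ (k : ℕ) (s : ℕ → ℕ),
      (D k s).DecomposesInto fun j : ℕ => D (k + 1) (Function.update s (k + 1) j))
    (hind : ∀ (k : ℕ) (s : ℕ → ℕ),
      (D (k + 1) s).IsBot ∨ (D (k + 1) s).IndecOn (-(k + 1 : ℤ)) (k + 1 : ℤ)) :
    (∀ s : ℕ → ℕ, ¬ (chainInf D s).IsBot → (chainInf D s).Indec) ∧
    (∀ i, iSupIndep fun s : ℕ → ℕ => (chainInf D s).p i) ∧
    (∀ i, (⨆ s : ℕ → ℕ, (chainInf D s).p i) = (⊤ : Submodule F (V.V i))) := by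
  classical
  have hsup : ∀ (l : ℕ) (s : ℕ → ℕ) (i : ℤ),
      (⨆ j : ℕ, (D (l+1) (Function.update s (l+1) j)).p i) = (D l s).p i :=
    fun l s i => (hrefine l s).2 i
  have hnest : ∀ (l : ℕ) (s : ℕ → ℕ) (i : ℤ), (D (l+1) s).p i ≤ (D l s).p i := by
    intro l s i
    calc (D (l+1) s).p i
        = (D (l+1) (Function.update s (l+1) (s (l+1)))).p i := by
          rw [Function.update_eq_self]
      _ ≤ ⨆ j : ℕ, (D (l+1) (Function.update s (l+1) j)).p i :=
          le_iSup (fun j => (D (l+1) (Function.update s (l+1) j)).p i) (s (l+1))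
      _ = (D l s).p i := hsup l s i
  have hnest_le : ∀ (s : ℕ → ℕ) (l l' : ℕ), l ≤ l' → ∀ i, (D l' s).p i ≤ (D l s).p i := by
    intro s l l' hll'
    induction l', hll' using Nat.le_induction with
    | base => exact fun i => le_rfl
    | succ n hn ih => exact fun i => (hnest n s i).trans (ih i)
  have hchain_le : ∀ (s : ℕ → ℕ) (l : ℕ) (i : ℤ), (chainInf D s).p i ≤ (D l s).p i :=
    fun s l i => iInf_le (fun l => (D l s).p i) l
  -- ============ PART 3 ============
  have part3 : ∀ i, (⨆ s : ℕ → ℕ, (chainInf D s).p i) = (⊤ : Submodule F (V.V i)) := by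
    intro i
    haveI := hfd i
    set S := ⨆ s : ℕ → ℕ, (chainInf D s).p i with hS
    have main : ∀ (n : ℕ) (L : ℕ) (s : ℕ → ℕ),
        Module.finrank F ((D L s).p i) ≤ n → (D L s).p i ≤ S := by
      intro n
      induction n using Nat.strong_induction_on with
      | _ n IH =>
        intro L s hrk
        by_cases hWS : (D L s).p i ≤ S
        · exact hWS
        · exfalso
          set W := (D L s).p i with hW
          have hex : ∀ (l : ℕ) (t : ℕ → ℕ), (D (L + l) t).p i = W →
              ∃ j, (D (L + l + 1) (Function.update t (L + l + 1) j)).p i = W := by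
            intro l t ht
            by_contra hno
            push_neg at hno
            apply hWS
            have hsupt : (⨆ j : ℕ, (D (L + l + 1) (Function.update t (L + l + 1) j)).p i) = W := by
              rw [hsup (L + l) t i, ht]
            rw [← ht, ← hsup (L + l) t i]
            refine iSup_le fun j => ?_
            have hle : (D (L + l + 1) (Function.update t (L + l + 1) j)).p i ≤ W := by
              rw [← hsupt]
              exact le_iSup (fun j => (D (L + l + 1) (Function.update t (L + l + 1) j)).p i) j
            have hlt : (D (L + l + 1) (Function.update t (L + l + 1) j)).p i < W :=
              lt_of_le_of_ne hle (hno j)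
            have hfr : Module.finrank F ((D (L + l + 1) (Function.update t (L + l + 1) j)).p i) < n :=
              lt_of_lt_of_le (Submodule.finrank_lt_finrank_of_lt hlt) hrk
            exact IH _ hfr _ _ le_rfl
          -- build the branch
          let u : ∀ l : ℕ, {t : ℕ → ℕ // (D (L + l) t).p i = W} :=
            fun l => Nat.rec (motive := fun l => {t : ℕ → ℕ // (D (L + l) t).p i = W})
              ⟨s, hW.symm⟩
              (fun l ih => ⟨Function.update ih.1 (L + l + 1) (Classical.choose (hex l ih.1 ih.2)),
                Classical.choose_spec (hex l ih.1 ih.2)⟩) l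
          have hu_step : ∀ l n, n ≤ L + l → (u (l+1)).1 n = (u l).1 n := by
            intro l n hn
            exact Function.update_of_ne (show n ≠ L + l + 1 by omega)
              (Classical.choose (hex l (u l).1 (u l).2)) (u l).1
          have hu_agree : ∀ l l', l ≤ l' → ∀ n, n ≤ L + l → (u l').1 n = (u l).1 n := by
            intro l l' hll'
            induction l', hll' using Nat.le_induction with
            | base => intro n _; rfl
            | succ k hk ih => intro n hn; rw [hu_step k n (by omega), ih n hn]
          set sh : ℕ → ℕ := fun n => (u n).1 n with hsh
          have hsh_agree : ∀ l n, n ≤ L + l → sh n = (u l).1 n := by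
            intro l n hn
            by_cases h : n ≤ l
            · exact (hu_agree n l h n (by omega)).symm
            · exact hu_agree l n (by omega) n hn
          have hDsh : ∀ l, (D (L + l) sh).p i = W := by
            intro l
            rw [hdep (L + l) sh (u l).1 (fun n hn => hsh_agree l n hn)]
            exact (u l).2
          have hWle : W ≤ (chainInf D sh).p i := by
            show W ≤ ⨅ l, (D l sh).p i
            refine le_iInf fun l => ?_
            by_cases h : L ≤ l
            · have h2 := hDsh (l - L)
              rw [show L + (l - L) = l by omega] at h2
              exact le_of_eq h2.symm
            · have h1 : (D L sh).p i = W := by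
                have := hDsh 0
                simpa using this
              calc W = (D L sh).p i := h1.symm
                _ ≤ (D l sh).p i := hnest_le sh l L (by omega) i
          exact hWS (le_trans hWle (le_iSup (fun s => (chainInf D s).p i) sh))
    have htop : (⨆ j : ℕ, (D 0 fun _ => j).p i) = (⊤ : Submodule F (V.V i)) := hroot.2 i
    rw [eq_top_iff, ← htop]
    exact iSup_le fun j => main _ 0 _ le_rfl
  -- ============ PART 2 ============
  have part2 : ∀ i, iSupIndep fun s : ℕ → ℕ => (chainInf D s).p i := by
    intro i s
    have hC : ∀ L : ℕ, Disjoint ((D L s).p i)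
        (⨆ t : {t : ℕ → ℕ // ∃ n ≤ L, t n ≠ s n}, (D L t.1).p i) := by
      intro L
      induction L with
      | zero =>
        have h1 : (D 0 s) = D 0 (fun _ => s 0) :=
          hdep 0 _ _ (fun n hn => by rw [Nat.le_zero.mp hn])
        have h2 := hroot.1 i (s 0)
        rw [h1]
        refine Disjoint.mono_right ?_ h2
        refine iSup_le fun t => ?_
        obtain ⟨n, hn, hne⟩ := t.2
        have hn0 : n = 0 := by omega
        subst hn0
        have h3 : D 0 t.1 = D 0 (fun _ => t.1 0) :=
          hdep 0 _ _ (fun n hn => by rw [Nat.le_zero.mp hn])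
        rw [h3]
        exact le_iSup₂ (f := fun (j : ℕ) (_ : j ≠ s 0) => (D 0 fun _ => j).p i) (t.1 0) hne
      | succ L ihL =>
        have haY : Disjoint ((D (L+1) s).p i)
            (⨆ j : {j : ℕ // j ≠ s (L+1)}, (D (L+1) (Function.update s (L+1) j.1)).p i) := by
          have h3 : Disjoint ((D (L+1) (Function.update s (L+1) (s (L+1)))).p i)
              (⨆ (j : ℕ) (_ : j ≠ s (L+1)), (D (L+1) (Function.update s (L+1) j)).p i) :=
            (hrefine L s).1 i (s (L+1))
          rw [Function.update_eq_self, iSup_subtype'] at h3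
          exact h3
        have hYc : (⨆ j : {j : ℕ // j ≠ s (L+1)}, (D (L+1) (Function.update s (L+1) j.1)).p i)
            ≤ (D L s).p i := by
          refine iSup_le fun j => ?_
          have heq : D L (Function.update s (L+1) j.1) = D L s :=
            hdep L _ _ (fun n hn => Function.update_of_ne (by omega) _ _)
          exact le_trans (hnest L _ i) (le_of_eq (congrArg (fun Q : Sub V => Q.p i) heq))
        have hsub : (⨆ t : {t : ℕ → ℕ // ∃ n ≤ L + 1, t n ≠ s n}, (D (L+1) t.1).p i) ≤
            (⨆ t : {t : ℕ → ℕ // ∃ n ≤ L, t n ≠ s n}, (D L t.1).p i) ⊔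
            (⨆ j : {j : ℕ // j ≠ s (L+1)}, (D (L+1) (Function.update s (L+1) j.1)).p i) := by
          refine iSup_le fun t => ?_
          by_cases h : ∃ n ≤ L, t.1 n ≠ s n
          · exact le_sup_of_le_left ((hnest L t.1 i).trans
              (le_iSup (fun t : {t : ℕ → ℕ // ∃ n ≤ L, t n ≠ s n} => (D L t.1).p i) ⟨t.1, h⟩))
          · push_neg at h
            obtain ⟨n, hn, hne⟩ := t.2
            have hn1 : n = L + 1 := by
              by_contra h'
              exact hne (h n (by omega))
            subst hn1
            have heq : D (L+1) t.1 = D (L+1) (Function.update s (L+1) (t.1 (L+1))) := by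
              apply hdep
              intro n hn'
              by_cases h2 : n = L + 1
              · subst h2; rw [Function.update_self]
              · rw [Function.update_of_ne h2]
                exact h n (by omega)
            rw [heq]
            exact le_sup_of_le_right (le_iSup
              (fun j : {j : ℕ // j ≠ s (L+1)} => (D (L+1) (Function.update s (L+1) j.1)).p i)
              ⟨t.1 (L+1), hne⟩)
        exact Disjoint.mono_right hsub
          (Stmt15Aux.disjoint_sup_aux (hnest L s i) hYc haY ihL)
    -- conclude
    rw [Submodule.disjoint_def]
    intro x hx hx2
    rw [iSup_subtype'] at hx2
    rw [Submodule.mem_iSup_iff_exists_finset] at hx2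
    obtain ⟨T, hT⟩ := hx2
    set wit : {t : ℕ → ℕ // t ≠ s} → ℕ :=
      fun t => Classical.choose (Function.ne_iff.1 t.2) with hwit
    set L : ℕ := T.sup wit with hL
    have hle : (⨆ t ∈ T, (chainInf D t.1).p i) ≤
        ⨆ t : {t : ℕ → ℕ // ∃ n ≤ L, t n ≠ s n}, (D L t.1).p i := by
      refine iSup₂_le fun t ht => ?_
      have hw := Classical.choose_spec (Function.ne_iff.1 t.2)
      refine le_trans (hchain_le t.1 L i) ?_
      exact le_iSup (fun t : {t : ℕ → ℕ // ∃ n ≤ L, t n ≠ s n} => (D L t.1).p i)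
        ⟨t.1, ⟨wit t, Finset.le_sup ht, hw⟩⟩
    exact Submodule.disjoint_def.1 (hC L) x (hchain_le s L i hx) (hle hT)
  -- ============ PART 1 ============
  have part1 : ∀ s : ℕ → ℕ, ¬ (chainInf D s).IsBot → (chainInf D s).Indec := by
    intro s hne
    obtain ⟨i0, hi0⟩ : ∃ i, (chainInf D s).p i ≠ ⊥ := by
      by_contra h; push_neg at h; exact hne (fun i => h i)
    set m := i0.natAbs with hm
    set R : ℕ → Sub V := fun l =>
      Stmt15Aux.subSup (fun j : {j : ℕ // j ≠ s (l+1)} =>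
        D (l+1) (Function.update s (l+1) j.1)) with hR
    have hRp : ∀ l i, (R l).p i =
        ⨆ j : {j : ℕ // j ≠ s (l+1)}, (D (l+1) (Function.update s (l+1) j.1)).p i :=
      fun l i => rfl
    have hsplit : ∀ l i, (D (l+1) s).p i ⊔ (R l).p i = (D l s).p i := by
      intro l i
      rw [hRp, ← hsup l s i,
        Stmt15Aux.iSup_split_ne (fun j => (D (l+1) (Function.update s (l+1) j)).p i) (s (l+1)),
        Function.update_eq_self]
    have hdisjR : ∀ l i, Disjoint ((D (l+1) s).p i) ((R l).p i) := by
      intro l i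
      have h3 : Disjoint ((D (l+1) (Function.update s (l+1) (s (l+1)))).p i)
          (⨆ (j : ℕ) (_ : j ≠ s (l+1)), (D (l+1) (Function.update s (l+1) j)).p i) :=
        (hrefine l s).1 i (s (l+1))
      rw [Function.update_eq_self, iSup_subtype'] at h3
      rw [hRp]
      exact h3
    have hvanish : ∀ k : ℕ, m ≤ k + 1 → ∀ i : ℤ, i.natAbs ≤ k + 1 → (R (k+1)).p i = ⊥ := by
      intro k hmk i hik
      rcases hind k s with hbot | hindec
      · exact absurd (le_bot_iff.1 ((hchain_le s (k+1) i0).trans (le_of_eq (hbot i0)))) hi0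
      · rcases hindec.2 (D (k+1+1) s) (R (k+1)) (fun i => hsplit (k+1) i)
          (fun i => disjoint_iff.1 (hdisjR (k+1) i)) with hA | hB
        · exfalso
          have hz := hA i0 (by omega) (by omega)
          exact hi0 (le_bot_iff.1 ((hchain_le s (k+1+1) i0).trans (le_of_eq hz)))
        · exact hB i (by omega) (by omega)
    have hstab : ∀ (i : ℤ) (l : ℕ), m ≤ l → i.natAbs ≤ l → 1 ≤ l →
        (D (l+1) s).p i = (D l s).p i := by
      intro i l h1 h2 h3
      obtain ⟨k, rfl⟩ : ∃ k, l = k + 1 := ⟨l - 1, by omega⟩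
      rw [← hsplit (k+1) i, hvanish k (by omega) i (by omega), sup_bot_eq]
    have hchain_eq : ∀ (i : ℤ) (L : ℕ), m ≤ L → i.natAbs ≤ L → 1 ≤ L →
        (chainInf D s).p i = (D L s).p i := by
      intro i L h1 h2 h3
      refine le_antisymm (hchain_le s L i) ?_
      have hconst : ∀ l, L ≤ l → (D l s).p i = (D L s).p i := by
        intro l hl
        induction l, hl using Nat.le_induction with
        | base => rfl
        | succ n hn ih => rw [hstab i n (by omega) (by omega) (by omega), ih]
      show (D L s).p i ≤ ⨅ l, (D l s).p i
      refine le_iInf fun l => ?_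
      by_cases h : L ≤ l
      · rw [hconst l h]
      · exact hnest_le s l L (by omega) i
    set T : ℕ → Sub V := fun L => Stmt15Aux.subSup (fun l : {l : ℕ // L ≤ l} => R l.1) with hT
    have hTp : ∀ L i, (T L).p i = ⨆ l : {l : ℕ // L ≤ l}, (R l.1).p i := fun L i => rfl
    have hRle : ∀ l i, (R l).p i ≤ (D l s).p i := by
      intro l i
      rw [hRp]
      refine iSup_le fun j => ?_
      have heq : D l (Function.update s (l+1) j.1) = D l s :=
        hdep l _ _ (fun n hn => Function.update_of_ne (by omega) _ _)
      exact le_trans (hnest l _ i) (le_of_eq (congrArg (fun Q : Sub V => Q.p i) heq))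
    have hTleD : ∀ L i, (T L).p i ≤ (D L s).p i := by
      intro L i
      rw [hTp]
      exact iSup_le fun l => (hRle l.1 i).trans (hnest_le s L l.1 l.2 i)
    have hDsplit : ∀ L i, (D L s).p i ≤ (chainInf D s).p i ⊔ (T L).p i := by
      intro L i
      have step : ∀ r : ℕ, (D L s).p i ≤ (D (L + r) s).p i ⊔ (T L).p i := by
        intro r
        induction r with
        | zero => simpa using le_sup_left
        | succ r ih =>
          have hmem : (R (L + r)).p i ≤ (T L).p i := by
            rw [hTp]
            exact le_iSup (fun l : {l : ℕ // L ≤ l} => (R l.1).p i) ⟨L + r, by omega⟩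
          have h2 : (D (L + r) s).p i ≤ (D (L + r + 1) s).p i ⊔ (T L).p i := by
            rw [← hsplit (L + r) i]
            exact sup_le le_sup_left (hmem.trans le_sup_right)
          exact ih.trans (sup_le h2 le_sup_right)
      set M : ℕ := max (max m i.natAbs) 1 with hM
      have hMm : m ≤ M := (le_max_left _ _).trans (le_max_left _ _)
      have hMi : i.natAbs ≤ M := (le_max_right _ _).trans (le_max_left _ _)
      have hM1 : 1 ≤ M := le_max_right _ _
      have hce := hchain_eq i (L + M) (by omega) (by omega) (by omega)
      exact (step M).trans (sup_le_sup_right (le_of_eq hce.symm) _)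
    have hTdisj : ∀ L i, Disjoint ((chainInf D s).p i) ((T L).p i) := by
      intro L i
      set Lstar : ℕ := max L (max (max m i.natAbs) 1) with hLs
      have hsm : m ≤ Lstar := le_trans ((le_max_left _ _).trans (le_max_left _ _)) (le_max_right _ _)
      have hsi : i.natAbs ≤ Lstar :=
        le_trans ((le_max_right _ _).trans (le_max_left _ _)) (le_max_right _ _)
      have hs1 : 1 ≤ Lstar := le_trans (le_max_right _ _) (le_max_right _ _)
      have hsL : L ≤ Lstar := le_max_left _ _
      have claim : ∀ q : ℕ, Disjoint ((chainInf D s).p i)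
          (⨆ l : {l : ℕ // Lstar - q ≤ l}, (R l.1).p i) := by
        intro q
        induction q with
        | zero =>
          have hz : (⨆ l : {l : ℕ // Lstar - 0 ≤ l}, (R l.1).p i) = ⊥ := by
            refine le_bot_iff.1 (iSup_le fun l => ?_)
            obtain ⟨k, hk⟩ : ∃ k, l.1 = k + 1 := ⟨l.1 - 1, by have := l.2; omega⟩
            rw [hk, hvanish k (by have := l.2; omega) i (by have := l.2; omega)]
          rw [hz]
          exact disjoint_bot_right
        | succ q ihq =>
          by_cases hq : Lstar ≤ q
          · have hqq : Lstar - (q+1) = Lstar - q := by omega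
            rw [hqq]
            exact ihq
          · push_neg at hq
            set l' : ℕ := Lstar - (q+1) with hl'
            have hl'1 : l' + 1 = Lstar - q := by omega
            have hsub2 : (⨆ l : {l : ℕ // Lstar - (q+1) ≤ l}, (R l.1).p i) ≤
                (R l').p i ⊔ (⨆ l : {l : ℕ // Lstar - q ≤ l}, (R l.1).p i) := by
              refine iSup_le fun l => ?_
              by_cases h : Lstar - q ≤ l.1
              · exact le_sup_of_le_right
                  (le_iSup (fun l : {l : ℕ // Lstar - q ≤ l} => (R l.1).p i) ⟨l.1, h⟩)
              · have hll : l.1 = l' := by have := l.2; omega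
                rw [hll]
                exact le_sup_left
            have hZc : (⨆ l : {l : ℕ // Lstar - q ≤ l}, (R l.1).p i) ≤ (D (l'+1) s).p i := by
              refine iSup_le fun l => ?_
              exact (hRle l.1 i).trans (hnest_le s (l'+1) l.1 (by rw [hl'1]; exact l.2) i)
            exact Disjoint.mono_right hsub2
              (Stmt15Aux.disjoint_sup_aux (hchain_le s (l'+1) i) hZc ihq (hdisjR l' i))
      have hfin := claim Lstar
      have hz : Lstar - Lstar = 0 := by omega
      rw [hz] at hfin
      refine Disjoint.mono_right ?_ hfin
      rw [hTp]
      exact iSup_le fun l => le_iSup (fun l : {l : ℕ // 0 ≤ l} => (R l.1).p i) ⟨l.1, by omega⟩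
    refine ⟨hne, ?_⟩
    intro A B hsupAB hinfAB
    by_contra hcon
    push_neg at hcon
    obtain ⟨hA, hB⟩ := hcon
    obtain ⟨a, ha⟩ : ∃ a, A.p a ≠ ⊥ := by
      by_contra h; push_neg at h; exact hA (fun i => h i)
    obtain ⟨b, hb⟩ : ∃ b, B.p b ≠ ⊥ := by
      by_contra h; push_neg at h; exact hB (fun i => h i)
    set k : ℕ := max m (max a.natAbs b.natAbs) with hk
    have hkm : m ≤ k := le_max_left _ _
    have hka : a.natAbs ≤ k := (le_max_left _ _).trans (le_max_right _ _)
    have hkb : b.natAbs ≤ k := (le_max_right _ _).trans (le_max_right _ _)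
    rcases hind k s with hbot | hindec
    · exact hi0 (le_bot_iff.1 ((hchain_le s (k+1) i0).trans (le_of_eq (hbot i0))))
    · have hsup' : ∀ i, (Stmt15Aux.sup2 A (T (k+1))).p i ⊔ B.p i = (D (k+1) s).p i := by
        intro i
        show (A.p i ⊔ (T (k+1)).p i) ⊔ B.p i = (D (k+1) s).p i
        rw [sup_right_comm, hsupAB i]
        refine le_antisymm (sup_le (hchain_le s (k+1) i) (hTleD (k+1) i)) (hDsplit (k+1) i)
      have hinf' : ∀ i, (Stmt15Aux.sup2 A (T (k+1))).p i ⊓ B.p i = ⊥ := by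
        intro i
        rw [inf_comm, ← disjoint_iff]
        show Disjoint (B.p i) (A.p i ⊔ (T (k+1)).p i)
        have hBc : B.p i ≤ (chainInf D s).p i := by rw [← hsupAB i]; exact le_sup_right
        have hAc : A.p i ≤ (chainInf D s).p i := by rw [← hsupAB i]; exact le_sup_left
        have hBA : Disjoint (B.p i) (A.p i) := by
          rw [disjoint_iff, inf_comm]
          exact hinfAB i
        have hres := Stmt15Aux.disjoint_sup_aux (a := B.p i) (c := (chainInf D s).p i)
          (X := (T (k+1)).p i) (Y := A.p i) hBc hAc hBA (hTdisj (k+1) i)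
        rwa [sup_comm] at hres
      rcases hindec.2 (Stmt15Aux.sup2 A (T (k+1))) B hsup' hinf' with h1 | h2
      · have hz : (Stmt15Aux.sup2 A (T (k+1))).p a = ⊥ := h1 a (by omega) (by omega)
        have : A.p a ≤ ⊥ := by
          refine le_trans ?_ (le_of_eq hz)
          show A.p a ≤ A.p a ⊔ (T (k+1)).p a
          exact le_sup_left
        exact ha (le_bot_iff.1 this)
      · exact hb (le_bot_iff.1 (le_of_eq (h2 b (by omega) (by omega))))
  exact ⟨part1, part2, part3⟩
end
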